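/- arXiv:2307.00962 — 4 statements merged into one kernel-verified Lean document; each statement's English description precedes it below -/
import Mathlib

section
/- Let U_el be an elastic quantum walk satisfying (A-1). (i) U_el has an eigenvalue if and only if some trajectory Φ(·,y,j) is closed. (ii) If Φ(·,y,j) is closed with Φ(0,y,j) = Φ(N,y,j) for the minimal period N ≥ 1, set β_t = α_{p(t,y,j)}(q(t,y,j)). Then for each λ ∈ ℝ with λN + β₀ + β₁ + ⋯ + β_{N−1} ∈ 2πℤ, the number e^{−iλ} is an eigenvalue of U_el possessing an eigenfunction supported on {Φ(t,y,j) : 0 ≤ t < N} (a map u is supported on a set A ⊆ ℤ² × {←,→,↓,↑} if u_k(x) = 0 whenever (x,k) ∉ A); there are exactly N such eigenvalues e^{−iλ}. -/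
noncomputable section

namespace QWPaper

open Complex

/-- Sites of the two-dimensional lattice. -/
abbrev Site : Type := ℤ × ℤ

/-- Chirality indices: `0 = ←`, `1 = →`, `2 = ↓`, `3 = ↑`. -/
abbrev Chir : Type := Fin 4

abbrev V : Type := EuclideanSpace ℂ (Fin 4)

/-- The Hilbert space `H = ℓ²(ℤ²; ℂ⁴)`. -/
abbrev H : Type := lp (fun _ : Site => V) 2

/-- The inner domain `Ω^i = {x : |x₁| ≤ M₀, |x₂| ≤ M₀}`. -/
def innerDom (M₀ : ℤ) : Set Site := {x | |x.1| ≤ M₀ ∧ |x.2| ≤ M₀}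

/-- `S` is the shift operator:
`(Su)(x) = (u_←(x+e₁), u_→(x−e₁), u_↓(x+e₂), u_↑(x−e₂))`. -/
def IsShiftOp (S : H →L[ℂ] H) : Prop :=
  ∀ (u : H) (x : Site),
    (S u) x 0 = u (x.1 + 1, x.2) 0 ∧
    (S u) x 1 = u (x.1 - 1, x.2) 1 ∧
    (S u) x 2 = u (x.1, x.2 + 1) 2 ∧
    (S u) x 3 = u (x.1, x.2 - 1) 3

/-- `A` is the bounded operator of pointwise multiplication by the matrix family `C`. -/
def IsCoinOp (A : H →L[ℂ] H) (C : Site → Matrix Chir Chir ℂ) : Prop :=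
  ∀ (u : H) (x : Site) (i : Chir), (A u) x i = ∑ j : Chir, C x i j * u x j

/-- Every coin matrix is unitary. -/
def IsUnitaryCoin (C : Site → Matrix Chir Chir ℂ) : Prop :=
  ∀ x, C x ∈ Matrix.unitaryGroup Chir ℂ

/-- Assumption (A-1): `C(x) = I₄` off `Ω^i`, with `M₀ ≥ 1`. -/
def SatisfiesA1 (C : Site → Matrix Chir Chir ℂ) (M₀ : ℤ) : Prop :=
  1 ≤ M₀ ∧ ∀ x, x ∉ innerDom M₀ → C x = 1

/-- `D_x(θ) = diag(e^{iθx₁}, e^{−iθx₁}, e^{iθx₂}, e^{−iθx₂})`. -/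
def Dmat (θ : ℂ) (x : Site) : Matrix Chir Chir ℂ :=
  Matrix.diagonal ![Complex.exp (Complex.I * θ * x.1), Complex.exp (-(Complex.I * θ * x.1)),
    Complex.exp (Complex.I * θ * x.2), Complex.exp (-(Complex.I * θ * x.2))]

/-- The translated coin `D_x(θ) C(x) D_x(θ)⁻¹`. -/
def transCoin (θ : ℂ) (C : Site → Matrix Chir Chir ℂ) (x : Site) : Matrix Chir Chir ℂ :=
  Dmat θ x * C x * (Dmat θ x)⁻¹

/-- The complex translated walk `U(θ) = e^{−iθ} S M(θ)`. -/
def transWalkOp (θ : ℂ) (S Mθ : H →L[ℂ] H) : H →L[ℂ] H :=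
  Complex.exp (-(Complex.I * θ)) • (S.comp Mθ)

/-- `⟨x⟩ = (1 + |x|²)^{1/2}`. -/
def jnorm (x : Site) : ℝ := Real.sqrt (1 + ((x.1 : ℝ) ^ 2 + (x.2 : ℝ) ^ 2))

/-- Super-exponentially decreasing elements of `H`: `e^{τ⟨x⟩} f ∈ H` for every `τ > 0`. -/
def SuperExpDecay (f : H) : Prop :=
  ∀ τ : ℝ, 0 < τ → Memℓp (fun x : Site => (Real.exp (τ * jnorm x) • f x : V)) 2

/-- Pointwise shift of an arbitrary `ℂ⁴`-valued map on `ℤ²`. -/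
def ptShift (v : Site → Chir → ℂ) (x : Site) : Chir → ℂ :=
  ![v (x.1 + 1, x.2) 0, v (x.1 - 1, x.2) 1, v (x.1, x.2 + 1) 2, v (x.1, x.2 - 1) 3]

/-- Pointwise coin action on an arbitrary `ℂ⁴`-valued map on `ℤ²`. -/
def ptCoin (C : Site → Matrix Chir Chir ℂ) (u : Site → Chir → ℂ) (x : Site) (i : Chir) : ℂ :=
  ∑ j : Chir, C x i j * u x j

/-- Pointwise action of the walk `U = SC` on arbitrary `ℂ⁴`-valued maps. -/
def ptWalk (C : Site → Matrix Chir Chir ℂ) (u : Site → Chir → ℂ) : Site → Chir → ℂ :=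
  ptShift (ptCoin C u)

/-- `u` is a pointwise solution of `U u = e^{−iκ} u`. -/
def IsPtSolution (C : Site → Matrix Chir Chir ℂ) (κ : ℂ) (u : Site → Chir → ℂ) : Prop :=
  ∀ (x : Site) (i : Chir), ptWalk C u x i = Complex.exp (-(Complex.I * κ)) * u x i

/-- `u` is outgoing with the explicit sequences `aL aR aD aU`. -/
def IsOutgoingWith (M₀ : ℤ) (κ : ℂ) (aL aR aD aU : ℤ → ℂ) (u : Site → Chir → ℂ) : Prop :=
  (∀ x : Site, x.1 < -M₀ → u x 0 = aL x.2 * Complex.exp (-(Complex.I * κ * x.1))) ∧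
  (∀ x : Site, M₀ < x.1 → u x 0 = 0) ∧
  (∀ x : Site, x.1 < -M₀ → u x 1 = 0) ∧
  (∀ x : Site, M₀ < x.1 → u x 1 = aR x.2 * Complex.exp (Complex.I * κ * x.1)) ∧
  (∀ x : Site, x.2 < -M₀ → u x 2 = aD x.1 * Complex.exp (-(Complex.I * κ * x.2))) ∧
  (∀ x : Site, M₀ < x.2 → u x 2 = 0) ∧
  (∀ x : Site, x.2 < -M₀ → u x 3 = 0) ∧
  (∀ x : Site, M₀ < x.2 → u x 3 = aU x.1 * Complex.exp (Complex.I * κ * x.2))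

/-- `u` is an outgoing map. -/
def IsOutgoing (M₀ : ℤ) (κ : ℂ) (u : Site → Chir → ℂ) : Prop :=
  ∃ aL aR aD aU : ℤ → ℂ, IsOutgoingWith M₀ κ aL aR aD aU u

/-- Elastic coin: column `j` of `C_el(x)` is `e^{iα_j(x)} 𝐞_{σ(x)(j)}`. -/
def elasticCoin (σ : Site → Equiv.Perm Chir) (α : Site → Chir → ℝ) (x : Site) :
    Matrix Chir Chir ℂ :=
  Matrix.of fun i j => if i = σ x j then Complex.exp (Complex.I * (α x j : ℂ)) else 0

/-- The initial state `δ_y 𝐞_j ∈ H`. -/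
def deltaState (y : Site) (j : Chir) : H := lp.single 2 y (EuclideanSpace.single j 1)

/-- `(q, p)` is the trajectory map of the elastic walk `Uel`:
`Uel^t (δ_y 𝐞_j)` is a modulus-one multiple of `δ_{q(t,y,j)} 𝐞_{p(t,y,j)}`. -/
def IsTrajectory (Uel : unitary (H →L[ℂ] H))
    (q : ℤ → Site → Chir → Site) (p : ℤ → Site → Chir → Chir) : Prop :=
  (∀ y j, q 0 y j = y ∧ p 0 y j = j) ∧
  ∀ (t : ℤ) (y : Site) (j : Chir), ∃ c : ℂ, ‖c‖ = 1 ∧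
    ((Uel ^ t : unitary (H →L[ℂ] H)) : H →L[ℂ] H) (deltaState y j)
      = c • deltaState (q t y j) (p t y j)

/-- Euclidean norm of a lattice point. -/
def znorm (x : Site) : ℝ := Real.sqrt ((x.1 : ℝ) ^ 2 + (x.2 : ℝ) ^ 2)

/-- The parts of the barrier `K`. -/
def K1p (M₀ : ℤ) : Set Site := {x | x.1 = M₀ ∧ |x.2| ≤ M₀}
def K1m (M₀ : ℤ) : Set Site := {x | x.1 = -M₀ ∧ |x.2| ≤ M₀}
def K2p (M₀ : ℤ) : Set Site := {x | x.2 = M₀ ∧ |x.1| ≤ M₀}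
def K2m (M₀ : ℤ) : Set Site := {x | x.2 = -M₀ ∧ |x.1| ≤ M₀}
def Kbar (M₀ : ℤ) : Set Site := K1p M₀ ∪ K1m M₀ ∪ K2p M₀ ∪ K2m M₀

/-- The exterior domain `Ω^e = (ℤ² \ Ω^i) ∪ K`. -/
def outerDom (M₀ : ℤ) : Set Site := {x | x ∉ innerDom M₀} ∪ Kbar M₀

/-- Membership in the interior space `H_i`. -/
def memHi (M₀ : ℤ) (u : H) : Prop :=
  (∀ x, x ∉ innerDom M₀ → ∀ i : Chir, u x i = 0) ∧
  (∀ x ∈ K1p M₀, u x 0 = 0) ∧ (∀ x ∈ K1m M₀, u x 1 = 0) ∧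
  (∀ x ∈ K2p M₀, u x 2 = 0) ∧ (∀ x ∈ K2m M₀, u x 3 = 0)

/-- Membership in the exterior space `H_e`. -/
def memHe (M₀ : ℤ) (u : H) : Prop :=
  (∀ x, x ∉ outerDom M₀ → ∀ i : Chir, u x i = 0) ∧
  (∀ x ∈ K1m M₀ ∪ K2p M₀ ∪ K2m M₀, u x 0 = 0) ∧
  (∀ x ∈ K1p M₀ ∪ K2p M₀ ∪ K2m M₀, u x 1 = 0) ∧
  (∀ x ∈ K2m M₀ ∪ K1p M₀ ∪ K1m M₀, u x 2 = 0) ∧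
  (∀ x ∈ K2p M₀ ∪ K1p M₀ ∪ K1m M₀, u x 3 = 0)

/-- The non-penetrable barrier conditions for `U_np`. -/
def IsBarrierWalk (M₀ : ℤ) (Unp : H →L[ℂ] H) : Prop :=
  ∀ u : H,
    (∀ x ∈ K1p M₀, (Unp u) (x.1 + 1, x.2) 1 = u x 0) ∧
    (∀ x ∈ K1m M₀, (Unp u) (x.1 - 1, x.2) 0 = u x 0) ∧
    (∀ x ∈ K2p M₀, (Unp u) (x.1, x.2 + 1) 3 = u x 2) ∧
    (∀ x ∈ K2m M₀, (Unp u) (x.1, x.2 - 1) 2 = u x 3)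

/-- The rectangular loop `L_{ε,s}(μ)` (boundary of the rectangle with half-widths `a`, `b`). -/
def loopSet (μ a b : ℝ) : Set ℂ :=
  {κ | |κ.re - μ| ≤ a ∧ |κ.im| ≤ b ∧ (|κ.re - μ| = a ∨ |κ.im| = b)}

/-- The four-corner elastic coin. -/
def fourCornerCoin (m₀ n₀ : ℤ) (x : Site) : Matrix Chir Chir ℂ :=
  if x = ((0 : ℤ), (0 : ℤ)) then !![0,1,0,0; 0,0,1,0; 0,0,0,1; 1,0,0,0]
  else if x = (m₀, (0 : ℤ)) then !![0,0,1,0; 1,0,0,0; 0,0,0,1; 0,1,0,0]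
  else if x = (m₀, n₀) then !![0,0,0,1; 1,0,0,0; 0,1,0,0; 0,0,1,0]
  else if x = ((0 : ℤ), n₀) then !![0,1,0,0; 0,0,0,1; 1,0,0,0; 0,0,1,0]
  else 1

/-- The four corners. -/
def corners (m₀ n₀ : ℤ) : Set Site :=
  {((0 : ℤ), (0 : ℤ)), (m₀, (0 : ℤ)), (m₀, n₀), ((0 : ℤ), n₀)}

/-- A perturbed four-corner coin `C_ε`. -/
def IsPerturbedFourCorner (m₀ n₀ : ℤ) (ε : ℝ) (Cε : Site → Matrix Chir Chir ℂ) : Prop :=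
  IsUnitaryCoin Cε ∧
  (∀ x, x ∉ corners m₀ n₀ → Cε x = 1) ∧
  (∀ x ∈ corners m₀ n₀, ∀ i j : Chir, ‖Cε x i j - fourCornerCoin m₀ n₀ x i j‖ < ε) ∧
  Cε ((0 : ℤ), (0 : ℤ)) 1 0 = 0 ∧ Cε ((0 : ℤ), (0 : ℤ)) 3 2 = 0 ∧
  Cε (m₀, (0 : ℤ)) 3 2 = 0 ∧ Cε (m₀, (0 : ℤ)) 0 1 = 0 ∧
  Cε (m₀, n₀) 2 3 = 0 ∧ Cε (m₀, n₀) 0 1 = 0 ∧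
  Cε ((0 : ℤ), n₀) 1 0 = 0 ∧ Cε ((0 : ℤ), n₀) 2 3 = 0

/-- `c_ε⁺ = c_{↑,←}(0,0) c_{←,↓}(m₀,0) c_{↓,→}(m₀,n₀) c_{→,↑}(0,n₀)`. -/
def cPlus (m₀ n₀ : ℤ) (Cε : Site → Matrix Chir Chir ℂ) : ℂ :=
  Cε ((0 : ℤ), (0 : ℤ)) 3 0 * Cε (m₀, (0 : ℤ)) 0 2 * Cε (m₀, n₀) 2 1 * Cε ((0 : ℤ), n₀) 1 3

/-- `c_ε⁻ = c_{→,↓}(0,0) c_{↑,→}(m₀,0) c_{←,↑}(m₀,n₀) c_{↓,←}(0,n₀)`. -/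
def cMinus (m₀ n₀ : ℤ) (Cε : Site → Matrix Chir Chir ℂ) : ℂ :=
  Cε ((0 : ℤ), (0 : ℤ)) 1 2 * Cε (m₀, (0 : ℤ)) 3 1 * Cε (m₀, n₀) 0 3 * Cε ((0 : ℤ), n₀) 2 0

/-- `u ∈ H` is supported on the set `A ⊆ ℤ² × {←,→,↓,↑}`. -/
def SupportedOn (u : H) (A : Set (Site × Chir)) : Prop :=
  ∀ (x : Site) (i : Chir), (x, i) ∉ A → u x i = 0

/-- The image of the closed trajectory `Φ₊` of the four-corner walk. -/
def imPhiPlus (m₀ n₀ : ℤ) : Set (Site × Chir) :=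
  {w | ∃ t : ℤ, 1 ≤ t ∧ t ≤ n₀ ∧ w = (((0 : ℤ), t), (3 : Chir))} ∪
  {w | ∃ t : ℤ, 1 ≤ t ∧ t ≤ m₀ ∧ w = ((t, n₀), (1 : Chir))} ∪
  {w | ∃ t : ℤ, 0 ≤ t ∧ t ≤ n₀ - 1 ∧ w = ((m₀, t), (2 : Chir))} ∪
  {w | ∃ t : ℤ, 0 ≤ t ∧ t ≤ m₀ - 1 ∧ w = ((t, (0 : ℤ)), (0 : Chir))}

/-- The image of the reversed closed trajectory `Φ₋` of the four-corner walk. -/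
def imPhiMinus (m₀ n₀ : ℤ) : Set (Site × Chir) :=
  {w | ∃ t : ℤ, 1 ≤ t ∧ t ≤ m₀ ∧ w = ((t, (0 : ℤ)), (1 : Chir))} ∪
  {w | ∃ t : ℤ, 1 ≤ t ∧ t ≤ n₀ ∧ w = ((m₀, t), (3 : Chir))} ∪
  {w | ∃ t : ℤ, 0 ≤ t ∧ t ≤ m₀ - 1 ∧ w = ((t, n₀), (0 : Chir))} ∪
  {w | ∃ t : ℤ, 0 ≤ t ∧ t ≤ n₀ - 1 ∧ w = (((0 : ℤ), t), (2 : Chir))}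

/-- The eight outgoing tails starting from the four corners. -/
def tails (m₀ n₀ : ℤ) : Set (Site × Chir) :=
  {w | ∃ N y₂ : ℤ, 1 ≤ N ∧ (y₂ = 0 ∨ y₂ = n₀) ∧ w = ((-N, y₂), (0 : Chir))} ∪
  {w | ∃ N y₁ : ℤ, 1 ≤ N ∧ (y₁ = 0 ∨ y₁ = m₀) ∧ w = ((y₁, n₀ + N), (3 : Chir))} ∪
  {w | ∃ N y₁ : ℤ, 1 ≤ N ∧ (y₁ = 0 ∨ y₁ = m₀) ∧ w = ((y₁, -N), (2 : Chir))} ∪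
  {w | ∃ N y₂ : ℤ, 1 ≤ N ∧ (y₂ = 0 ∨ y₂ = n₀) ∧ w = ((m₀ + N, y₂), (1 : Chir))}

/-- The shape resonance perturbation `C_ε` of the barrier coin `C_np`. -/
def IsShapePerturbation (M₀ : ℤ) (Cnp : Site → Matrix Chir Chir ℂ) (ε : ℝ)
    (Cε : Site → Matrix Chir Chir ℂ) : Prop :=
  IsUnitaryCoin Cε ∧ (∀ x, x ∉ Kbar M₀ → Cε x = Cnp x) ∧
  (∀ x ∈ Kbar M₀, ∀ i j : Chir, ‖Cε x i j - Cnp x i j‖ < ε)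

/-- Counterclockwise contour integral of an operator-valued map over the boundary of the
rectangle centered at `μ ∈ ℝ` with half-widths `a` and `b`. -/
def rectIntegral (f : ℂ → (H →L[ℂ] H)) (μ a b : ℝ) : H →L[ℂ] H :=
  ((∫ t in (μ - a)..(μ + a), f (t - b * Complex.I)) -
      (∫ t in (μ - a)..(μ + a), f (t + b * Complex.I))) +
  Complex.I • ((∫ s in (-b)..b, f ((μ + a : ℝ) + s * Complex.I)) -
      (∫ s in (-b)..b, f ((μ - a : ℝ) + s * Complex.I)))

/-- The Riesz-type projection `(1/2π) ∮ e^{−iκ} (A − e^{−iκ})^{−1} dκ` over the rectangular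
loop of half-widths `a`, `b` around `μ`. -/
def rieszProj (A : H →L[ℂ] H) (μ a b : ℝ) : H →L[ℂ] H :=
  (1 / (2 * Real.pi)) •
    rectIntegral (fun κ => Complex.exp (-(Complex.I * κ)) •
      Ring.inverse (A - Complex.exp (-(Complex.I * κ)) • (1 : H →L[ℂ] H))) μ a b

end QWPaper

/-! An elastic coin maps each `δ_x 𝐞_i` to a unimodular multiple of another such state, so the
trajectories are the orbits of `U_el` on these states, up to phases. By unitarity, an eigenvector
`u` has `|u|` constant along every trajectory, so square-summability forces the trajectory
through a point of the support of `u` to repeat. Conversely, along a closed trajectory of minimal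
period `N`, the vector `∑_{t<N} e^{iλt} U^t (δ_y 𝐞_j)` is nonzero (it equals `1` at `(y, j)`),
is supported on the trajectory, and telescopes to an eigenvector for `e^{-iλ}` as soon as
`e^{iλN}` cancels the accumulated phase `e^{i(β₀ + ⋯ + β_{N-1})}`. These eigenvalues are the
`N` distinct roots of `z^N = e^{i(β₀ + ⋯ + β_{N-1})}`. -/

section UnitaryEigenvector

variable {𝕜 E : Type*} [RCLike 𝕜] [NormedAddCommGroup E] [InnerProductSpace 𝕜 E] [CompleteSpace E]

theorem Unitary.norm_eq_one_of_apply_eq_smul (A : unitary (E →L[𝕜] E)) {z : 𝕜} {u : E}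
    (hu : u ≠ 0) (h : (A : E →L[𝕜] E) u = z • u) : ‖z‖ = 1 := by
  have hnorm := Unitary.norm_map A u
  rw [h, norm_smul] at hnorm
  exact (mul_eq_right₀ (norm_ne_zero_iff.mpr hu)).mp hnorm

theorem Unitary.zpow_apply_of_apply_eq_smul (A : unitary (E →L[𝕜] E)) {z : 𝕜} (hz : z ≠ 0)
    {u : E} (h : (A : E →L[𝕜] E) u = z • u) (t : ℤ) :
    ((A ^ t : unitary (E →L[𝕜] E)) : E →L[𝕜] E) u = z ^ t • u := by
  have hinv : ((A⁻¹ : unitary (E →L[𝕜] E)) : E →L[𝕜] E) u = z⁻¹ • u := by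
    rw [eq_inv_smul_iff₀ hz, ← map_smul, ← h, ← mul_apply_eq_comp, ← Submonoid.coe_mul,
      inv_mul_cancel, Submonoid.coe_one, one_apply_eq_self]
  induction t using Int.induction_on with
  | zero => simp
  | succ n ih =>
    rw [zpow_add_one, Submonoid.coe_mul, mul_apply_eq_comp, h, map_smul, ih,
      smul_smul, zpow_add_one₀ hz, mul_comm]
  | pred n ih =>
    rw [zpow_sub_one, Submonoid.coe_mul, mul_apply_eq_comp, hinv, map_smul, ih,
      smul_smul, zpow_sub_one₀ hz, mul_comm]

theorem Unitary.norm_inner_zpow_apply_left_of_apply_eq_smul (A : unitary (E →L[𝕜] E)) {z : 𝕜}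
    (hz : ‖z‖ = 1) {u : E} (h : (A : E →L[𝕜] E) u = z • u) (v : E) (t : ℤ) :
    ‖inner 𝕜 (((A ^ t : unitary (E →L[𝕜] E)) : E →L[𝕜] E) v) u‖ = ‖inner 𝕜 v u‖ := by
  have hz0 : z ≠ 0 := norm_ne_zero_iff.mp (hz ▸ one_ne_zero)
  rw [← Unitary.inner_map_map (A ^ t) v u, Unitary.zpow_apply_of_apply_eq_smul A hz0 h,
    inner_smul_right, norm_mul, norm_zpow, hz, one_zpow, one_mul]

end UnitaryEigenvector

theorem lp.finite_setOf_le_norm {ι : Type*} {E : ι → Type*} [∀ i, NormedAddCommGroup (E i)]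
    {p : ENNReal} (hp : 0 < p.toReal) (u : lp E p) {ε : ℝ} (hε : 0 < ε) :
    {i | ε ≤ ‖u i‖}.Finite := by
  have hsmall : ∀ᶠ i in Filter.cofinite, ‖u i‖ ^ p.toReal < ε ^ p.toReal :=
    ((lp.memℓp u).summable hp).tendsto_cofinite_zero.eventually_lt_const (by positivity)
  refine (Filter.eventually_cofinite.mp hsmall).subset fun i hi => ?_
  exact not_lt.mpr (Real.rpow_le_rpow hε.le hi hp.le)

theorem Complex.ncard_setOf_pow_eq {a : ℂ} (ha : a ≠ 0) {N : ℕ} (hN : 0 < N) :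
    {z : ℂ | z ^ N = a}.ncard = N := by
  classical
  have hζ := Complex.isPrimitiveRoot_exp N hN.ne'
  have hroot : ∃ w : ℂ, w ^ N = a := IsAlgClosed.exists_pow_nat_eq a hN
  have hset : {z : ℂ | z ^ N = a} = ↑(Polynomial.nthRootsFinset N a) := by
    ext z; simp [Polynomial.mem_nthRootsFinset hN]
  rw [hset, Set.ncard_coe_finset, Polynomial.nthRootsFinset_def,
    Multiset.toFinset_card_of_nodup (hζ.nthRoots_nodup ha), hζ.card_nthRoots, if_pos hroot]

theorem Module.End.smul_apply_sum_pow_smul_eq {R M : Type*} [Semiring R] [AddCancelCommMonoid M]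
    [Module R M] (A : Module.End R M) (μ : R) (v : M) (N : ℕ) (hv : μ ^ N • (A ^ N) v = v) :
    μ • A (∑ t ∈ Finset.range N, μ ^ t • (A ^ t) v) = ∑ t ∈ Finset.range N, μ ^ t • (A ^ t) v := by
  set f : ℕ → M := fun t => μ ^ t • (A ^ t) v
  have hstep : ∀ t, μ • A (f t) = f (t + 1) := fun t => by
    simp only [f]
    rw [map_smul, smul_smul, ← pow_succ', pow_succ' A, Module.End.mul_apply]
  rw [map_sum, Finset.smul_sum, Finset.sum_congr rfl fun t _ => hstep t]
  refine add_right_cancel (b := f 0) ?_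
  rw [← Finset.sum_range_succ' f, Finset.sum_range_succ]
  simp [f, hv]

theorem Complex.setOf_exp_eq_setOf_pow_eq {N : ℕ} (hN : 0 < N) (B : ℝ) :
    {z : ℂ | ∃ lam : ℝ, z = exp (-(I * lam)) ∧ ∃ n : ℤ, lam * N + B = 2 * Real.pi * n}
      = {z : ℂ | z ^ N = exp (I * B)} := by
  ext z
  constructor
  · rintro ⟨lam, rfl, n, hn⟩
    have hexp : N * -(I * lam) = I * B + (-n : ℤ) * (2 * Real.pi * I) := by
      have := congrArg (fun r : ℝ => I * r) hn
      push_cast at this ⊢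
      linear_combination -this
    rw [Set.mem_ofPred_eq, ← exp_nat_mul, hexp, exp_add, exp_int_mul_two_pi_mul_I, mul_one]
  · intro hz
    have hnorm : ‖z‖ = 1 := by
      have := congrArg norm hz
      rwa [norm_pow, norm_exp_I_mul_ofReal, pow_eq_one_iff_of_nonneg (norm_nonneg z) hN.ne'] at this
    have hpolar : z = exp (-(I * (-arg z : ℝ))) := by
      conv_lhs => rw [← norm_mul_exp_arg_mul_I z, hnorm]
      push_cast
      ring_nf
    refine ⟨-arg z, hpolar, ?_⟩
    rw [Set.mem_ofPred_eq, hpolar, ← exp_nat_mul, exp_eq_exp_iff_exists_int] at hz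
    obtain ⟨n, hn⟩ := hz
    refine ⟨-n, ?_⟩
    have : ((-arg z * N + B : ℝ) : ℂ) = ((2 * Real.pi * (-n : ℤ) : ℝ) : ℂ) := by
      push_cast at hn ⊢
      linear_combination I * hn + (-(arg z : ℂ) * N + B + 2 * Real.pi * n) * I_sq
    exact_mod_cast this

namespace QWPaper

theorem deltaState_apply (y : Site) (j : Chir) (x : Site) (i : Chir) :
    deltaState y j x i = if x = y ∧ i = j then 1 else 0 := by
  rcases eq_or_ne x y with rfl | hxy <;> simp [deltaState, *]

theorem sum_apply_apply {ι : Type*} (s : Finset ι) (f : ι → H) (x : Site) (k : Chir) :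
    (∑ i ∈ s, f i) x k = ∑ i ∈ s, f i x k := by
  simp only [lp.coeFn_sum, Finset.sum_apply, WithLp.ofLp_sum]

theorem inner_deltaState_left (y : Site) (j : Chir) (u : H) :
    inner ℂ (deltaState y j) u = u y j := by
  simp [deltaState, lp.inner_single_left, EuclideanSpace.inner_single_left]

theorem eq_of_smul_deltaState_eq {c c' : ℂ} {y y' : Site} {j j' : Chir} (hc : c ≠ 0)
    (h : c • deltaState y j = c' • deltaState y' j') : y = y' ∧ j = j' := by
  have hyj := congrArg (fun u : H => u y j) h
  by_contra hne
  simp [deltaState_apply, hne, hc] at hyj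

variable {Uel : unitary (H →L[ℂ] H)} {q : ℤ → Site → Chir → Site} {p : ℤ → Site → Chir → Chir}

theorem IsTrajectory.add (htraj : IsTrajectory Uel q p) (s t : ℤ) (y : Site) (j : Chir) :
    q (s + t) y j = q s (q t y j) (p t y j) ∧ p (s + t) y j = p s (q t y j) (p t y j) := by
  obtain ⟨c₁, -, h₁⟩ := htraj.2 t y j
  obtain ⟨c₂, -, h₂⟩ := htraj.2 s (q t y j) (p t y j)
  obtain ⟨c₃, hc₃, h₃⟩ := htraj.2 (s + t) y j
  refine eq_of_smul_deltaState_eq (c' := c₂ * c₁) (norm_ne_zero_iff.mp (hc₃ ▸ one_ne_zero)) ?_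
  rw [← h₃, zpow_add, Submonoid.coe_mul, mul_apply_eq_comp, h₁, map_smul, h₂, smul_smul,
    mul_comm]

theorem IsTrajectory.norm_apply_eq_of_eigenvector (htraj : IsTrajectory Uel q p) {z : ℂ}
    {u : H} (hu : u ≠ 0) (heig : (Uel : H →L[ℂ] H) u = z • u) (t : ℤ) (x : Site) (i : Chir) :
    ‖u (q t x i) (p t x i)‖ = ‖u x i‖ := by
  obtain ⟨c, hc, hct⟩ := htraj.2 t x i
  have h := Unitary.norm_inner_zpow_apply_left_of_apply_eq_smul Uel
    (Unitary.norm_eq_one_of_apply_eq_smul Uel hu heig) heig (deltaState x i) t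
  rwa [hct, inner_smul_left, inner_deltaState_left, inner_deltaState_left, norm_mul,
    RCLike.norm_conj, hc, one_mul] at h

theorem IsTrajectory.exists_closed_of_eigenvector (htraj : IsTrajectory Uel q p) {z : ℂ}
    {u : H} (hu : u ≠ 0) (heig : (Uel : H →L[ℂ] H) u = z • u) :
    ∃ (y : Site) (j : Chir) (t₁ t₂ : ℤ), t₁ < t₂ ∧ q t₁ y j = q t₂ y j ∧ p t₁ y j = p t₂ y j := by
  obtain ⟨x, i, hxi⟩ : ∃ (x : Site) (i : Chir), u x i ≠ 0 := by
    by_contra! h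
    exact hu (lp.ext (funext fun x => PiLp.ext (h x)))
  by_contra! hopen
  have hinj : Function.Injective fun t : ℤ => (q t x i, p t x i) := by
    intro t t' htt
    simp only [Prod.mk.injEq] at htt
    rcases lt_trichotomy t t' with hlt | heq | hgt
    · exact absurd htt.2 (hopen x i t t' hlt htt.1)
    · exact heq
    · exact absurd htt.2.symm (hopen x i t' t hgt htt.1.symm)
  have hfin : {s : Site | ‖u x i‖ ≤ ‖u s‖}.Finite :=
    lp.finite_setOf_le_norm (by norm_num) u (norm_pos_iff.mpr hxi)
  refine Set.infinite_range_of_injective hinj ((hfin.prod Set.finite_univ).subset ?_)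
  rintro _ ⟨t, rfl⟩
  refine ⟨?_, trivial⟩
  calc ‖u x i‖ = ‖u (q t x i) (p t x i)‖ := (htraj.norm_apply_eq_of_eigenvector hu heig t x i).symm
    _ ≤ ‖u (q t x i)‖ := PiLp.norm_apply_le _ _

-- `S` moves the chirality-`k` component into `x` from `sourceSite x k`.
def sourceSite (x : Site) : Chir → Site :=
  ![(x.1 + 1, x.2), (x.1 - 1, x.2), (x.1, x.2 + 1), (x.1, x.2 - 1)]

theorem IsShiftOp.comp_coinOp_apply {S Cop : H →L[ℂ] H} (hS : IsShiftOp S)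
    {C : Site → Matrix Chir Chir ℂ} (hCop : IsCoinOp Cop C) (u : H) (x : Site) (k : Chir) :
    (S.comp Cop) u x k = ∑ j : Chir, C (sourceSite x k) k j * u (sourceSite x k) j := by
  rw [ContinuousLinearMap.comp_apply]
  obtain ⟨h0, h1, h2, h3⟩ := hS (Cop u) x
  fin_cases k
  · exact h0.trans (hCop u _ 0)
  · exact h1.trans (hCop u _ 1)
  · exact h2.trans (hCop u _ 2)
  · exact h3.trans (hCop u _ 3)

variable {σ : Site → Equiv.Perm Chir} {α : Site → Chir → ℝ} {S Cop : H →L[ℂ] H}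

theorem IsTrajectory.apply_deltaState (hS : IsShiftOp S) (hCop : IsCoinOp Cop (elasticCoin σ α))
    (hUel : (Uel : H →L[ℂ] H) = S.comp Cop) (htraj : IsTrajectory Uel q p) (x : Site) (i : Chir) :
    (Uel : H →L[ℂ] H) (deltaState x i)
      = Complex.exp (Complex.I * α x i) • deltaState (q 1 x i) (p 1 x i) := by
  obtain ⟨c, hc, hstep⟩ := htraj.2 1 x i
  rw [zpow_one] at hstep
  have hc0 : c ≠ 0 := norm_ne_zero_iff.mp (hc ▸ one_ne_zero)
  have hcoef : c = ∑ j : Chir, elasticCoin σ α (sourceSite (q 1 x i) (p 1 x i)) (p 1 x i) j *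
      deltaState x i (sourceSite (q 1 x i) (p 1 x i)) j := by
    have := congrArg (fun u : H => u (q 1 x i) (p 1 x i)) hstep
    simp only [hUel, hS.comp_coinOp_apply hCop] at this
    simpa [deltaState_apply] using this.symm
  rw [hstep]
  congr 1
  by_cases hsrc : sourceSite (q 1 x i) (p 1 x i) = x
  · rw [hsrc] at hcoef
    simp only [deltaState_apply, elasticCoin, Matrix.of_apply, true_and, mul_ite, mul_one,
      mul_zero, Finset.sum_ite_eq', Finset.mem_univ, if_true] at hcoef
    split_ifs at hcoef
    · exact hcoef
    · exact absurd hcoef hc0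
  · simp [hsrc, deltaState_apply] at hcoef
    exact absurd hcoef hc0

theorem IsTrajectory.pow_apply_deltaState (hS : IsShiftOp S)
    (hCop : IsCoinOp Cop (elasticCoin σ α)) (hUel : (Uel : H →L[ℂ] H) = S.comp Cop)
    (htraj : IsTrajectory Uel q p) (y : Site) (j : Chir) (n : ℕ) :
    ((Uel : H →L[ℂ] H) ^ n) (deltaState y j)
      = Complex.exp (Complex.I * ∑ t ∈ Finset.range n, α (q t y j) (p t y j))
        • deltaState (q n y j) (p n y j) := by
  induction n with
  | zero => simp [(htraj.1 y j).1, (htraj.1 y j).2]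
  | succ n ih =>
    obtain ⟨hq, hp⟩ := htraj.add 1 n y j
    rw [pow_succ', mul_apply_eq_comp, ih, map_smul,
      htraj.apply_deltaState hS hCop hUel, smul_smul, ← Complex.exp_add, ← hq, ← hp,
      Finset.sum_range_succ, add_comm (1 : ℤ)]
    push_cast
    ring_nf

theorem IsTrajectory.pow_apply_deltaState_apply_eq_zero (htraj : IsTrajectory Uel q p)
    {y : Site} {j : Chir} {t : ℕ} {x : Site} {k : Chir} (h : ¬(x = q t y j ∧ k = p t y j)) :
    ((Uel : H →L[ℂ] H) ^ t) (deltaState y j) x k = 0 := by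
  obtain ⟨c, -, hc⟩ := htraj.2 t y j
  rw [zpow_natCast, SubmonoidClass.coe_pow] at hc
  simp [hc, deltaState_apply, h]

theorem IsTrajectory.supportedOn_sum_pow_smul (htraj : IsTrajectory Uel q p) (μ : ℂ) (y : Site)
    (j : Chir) (N : ℕ) :
    SupportedOn (∑ t ∈ Finset.range N, μ ^ t • ((Uel : H →L[ℂ] H) ^ t) (deltaState y j))
      {w | ∃ t : ℕ, t < N ∧ w = (q t y j, p t y j)} := by
  intro x k hxk
  rw [sum_apply_apply]
  refine Finset.sum_eq_zero fun t ht => ?_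
  rw [lp.coeFn_smul, Pi.smul_apply, PiLp.smul_apply, htraj.pow_apply_deltaState_apply_eq_zero,
    smul_zero]
  rintro ⟨rfl, rfl⟩
  exact hxk ⟨t, Finset.mem_range.mp ht, rfl⟩

theorem IsTrajectory.sum_pow_smul_apply_self (htraj : IsTrajectory Uel q p) (μ : ℂ) {y : Site}
    {j : Chir} {N : ℕ} (hN : 1 ≤ N)
    (hmin : ∀ m : ℕ, 0 < m → m < N → ¬(q m y j = y ∧ p m y j = j)) :
    (∑ t ∈ Finset.range N, μ ^ t • ((Uel : H →L[ℂ] H) ^ t) (deltaState y j)) y j = 1 := by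
  rw [sum_apply_apply, Finset.sum_eq_single_of_mem 0 (Finset.mem_range.mpr hN)]
  · simp [deltaState_apply]
  · intro t ht ht0
    rw [lp.coeFn_smul, Pi.smul_apply, PiLp.smul_apply, htraj.pow_apply_deltaState_apply_eq_zero,
      smul_zero]
    rintro ⟨hq, hp⟩
    exact hmin t (Nat.pos_of_ne_zero ht0) (Finset.mem_range.mp ht) ⟨hq.symm, hp.symm⟩

theorem IsTrajectory.exp_pow_smul_pow_apply_deltaState_of_period (hS : IsShiftOp S)
    (hCop : IsCoinOp Cop (elasticCoin σ α)) (hUel : (Uel : H →L[ℂ] H) = S.comp Cop)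
    (htraj : IsTrajectory Uel q p) {y : Site} {j : Chir} {N : ℕ}
    (hper : q N y j = y ∧ p N y j = j) {lam : ℝ}
    (hlam : ∃ n : ℤ, lam * N + ∑ t ∈ Finset.range N, α (q t y j) (p t y j) = 2 * Real.pi * n) :
    Complex.exp (Complex.I * lam) ^ N • ((Uel : H →L[ℂ] H) ^ N) (deltaState y j)
      = deltaState y j := by
  obtain ⟨n, hn⟩ := hlam
  have hphase : N * (Complex.I * lam) + Complex.I * ↑(∑ t ∈ Finset.range N, α (q t y j) (p t y j))
      = n * (2 * Real.pi * Complex.I) := by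
    have := congrArg (fun r : ℝ => Complex.I * r) hn
    push_cast at this ⊢
    linear_combination this
  rw [htraj.pow_apply_deltaState hS hCop hUel, hper.1, hper.2, smul_smul, ← Complex.exp_nat_mul,
    ← Complex.exp_add, hphase, Complex.exp_int_mul_two_pi_mul_I, one_smul]

theorem IsTrajectory.exists_eigenvector_of_minimal_period (hS : IsShiftOp S)
    (hCop : IsCoinOp Cop (elasticCoin σ α)) (hUel : (Uel : H →L[ℂ] H) = S.comp Cop)
    (htraj : IsTrajectory Uel q p) (y : Site) (j : Chir) (N : ℕ) (hN : 1 ≤ N)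
    (hper : q N y j = y ∧ p N y j = j)
    (hmin : ∀ m : ℕ, 0 < m → m < N → ¬(q m y j = y ∧ p m y j = j)) (lam : ℝ)
    (hlam : ∃ n : ℤ, lam * N + ∑ t ∈ Finset.range N, α (q t y j) (p t y j) = 2 * Real.pi * n) :
    ∃ u : H, u ≠ 0 ∧ (Uel : H →L[ℂ] H) u = Complex.exp (-(Complex.I * lam)) • u ∧
      SupportedOn u {w | ∃ t : ℕ, t < N ∧ w = (q t y j, p t y j)} := by
  set U : H →L[ℂ] H := (Uel : H →L[ℂ] H)
  set μ : ℂ := Complex.exp (Complex.I * lam)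
  set u : H := ∑ t ∈ Finset.range N, μ ^ t • (U ^ t) (deltaState y j)
  have heig : μ • U u = u := by
    have := Module.End.smul_apply_sum_pow_smul_eq (U : H →ₗ[ℂ] H) μ (deltaState y j) N
    simp only [← ContinuousLinearMap.toLinearMap_pow, ContinuousLinearMap.coe_coe] at this
    exact this (htraj.exp_pow_smul_pow_apply_deltaState_of_period hS hCop hUel hper hlam)
  refine ⟨u, fun hu0 => ?_, ?_, htraj.supportedOn_sum_pow_smul μ y j N⟩
  · have hyj : u y j = 1 := htraj.sum_pow_smul_apply_self μ hN hmin
    simp [hu0] at hyj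
  · calc U u = Complex.exp (-(Complex.I * lam)) • (μ • U u) := by
          rw [smul_smul, ← Complex.exp_add, neg_add_cancel, Complex.exp_zero, one_smul]
      _ = Complex.exp (-(Complex.I * lam)) • u := by rw [heig]

theorem IsTrajectory.exists_minimal_period (htraj : IsTrajectory Uel q p) {y : Site} {j : Chir}
    {t₁ t₂ : ℤ} (hlt : t₁ < t₂) (hq : q t₁ y j = q t₂ y j) (hp : p t₁ y j = p t₂ y j) :
    ∃ (w : Site) (k : Chir) (N : ℕ), 1 ≤ N ∧ (q N w k = w ∧ p N w k = k) ∧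
      ∀ m : ℕ, 0 < m → m < N → ¬(q m w k = w ∧ p m w k = k) := by
  have hperiodic : ∃ m : ℕ, 0 < m ∧ q m (q t₁ y j) (p t₁ y j) = q t₁ y j ∧
      p m (q t₁ y j) (p t₁ y j) = p t₁ y j := by
    refine ⟨(t₂ - t₁).toNat, by omega, ?_⟩
    obtain ⟨hq', hp'⟩ := htraj.add (t₂ - t₁) t₁ y j
    rw [Int.toNat_of_nonneg (by omega), ← hq', ← hp', sub_add_cancel]
    exact ⟨hq.symm, hp.symm⟩
  classical
  exact ⟨_, _, Nat.find hperiodic, (Nat.find_spec hperiodic).1,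
    (Nat.find_spec hperiodic).2, fun m hm hmN hmw => Nat.find_min hperiodic hmN ⟨hm, hmw⟩⟩

theorem elastic_eigenvalues_and_closed_trajectories_general
    (σ : Site → Equiv.Perm Chir) (α : Site → Chir → ℝ)
    (S Cop : H →L[ℂ] H) (hS : IsShiftOp S) (hCop : IsCoinOp Cop (elasticCoin σ α))
    (Uel : unitary (H →L[ℂ] H)) (hUel : (Uel : H →L[ℂ] H) = S.comp Cop)
    (q : ℤ → Site → Chir → Site) (p : ℤ → Site → Chir → Chir)
    (htraj : IsTrajectory Uel q p) :
    ((∃ (z : ℂ) (u : H), u ≠ 0 ∧ (Uel : H →L[ℂ] H) u = z • u) ↔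
      (∃ (y : Site) (j : Chir) (t₁ t₂ : ℤ),
        t₁ < t₂ ∧ q t₁ y j = q t₂ y j ∧ p t₁ y j = p t₂ y j)) ∧
    ∀ (y : Site) (j : Chir) (N : ℕ), 1 ≤ N →
      (q (N : ℤ) y j = y ∧ p (N : ℤ) y j = j) →
      (∀ m : ℕ, 0 < m → m < N → ¬(q (m : ℤ) y j = y ∧ p (m : ℤ) y j = j)) →
      ((∀ lam : ℝ,
          (∃ n : ℤ, lam * N + ∑ t ∈ Finset.range N, α (q (t : ℤ) y j) (p (t : ℤ) y j)
              = 2 * Real.pi * n) →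
          ∃ u : H, u ≠ 0 ∧ (Uel : H →L[ℂ] H) u = Complex.exp (-(Complex.I * (lam : ℂ))) • u ∧
            ∀ (x : Site) (k : Chir),
              (x, k) ∉ {w : Site × Chir | ∃ t : ℕ, t < N ∧ w = (q (t : ℤ) y j, p (t : ℤ) y j)} →
              u x k = 0) ∧
        Set.ncard {z : ℂ | ∃ lam : ℝ, z = Complex.exp (-(Complex.I * (lam : ℂ))) ∧
            ∃ n : ℤ, lam * N + ∑ t ∈ Finset.range N, α (q (t : ℤ) y j) (p (t : ℤ) y j)
              = 2 * Real.pi * n} = N) := by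
  refine ⟨⟨fun ⟨_, _, hu, heig⟩ => htraj.exists_closed_of_eigenvector hu heig, ?_⟩, ?_⟩
  · rintro ⟨y, j, t₁, t₂, hlt, hq, hp⟩
    obtain ⟨w, k, N, hN, hper, hmin⟩ := htraj.exists_minimal_period hlt hq hp
    set B := ∑ t ∈ Finset.range N, α (q t w k) (p t w k)
    have hlam : ∃ n : ℤ, -B / N * N + B = 2 * Real.pi * n := ⟨0, by field_simp; ring⟩
    obtain ⟨u, hu, heig, -⟩ :=
      htraj.exists_eigenvector_of_minimal_period hS hCop hUel w k N hN hper hmin _ hlam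
    exact ⟨_, u, hu, heig⟩
  · intro y j N hN hper hmin
    refine ⟨htraj.exists_eigenvector_of_minimal_period hS hCop hUel y j N hN hper hmin, ?_⟩
    rw [Complex.setOf_exp_eq_setOf_pow_eq hN, Complex.ncard_setOf_pow_eq (Complex.exp_ne_zero _) hN]

/-- an elastic quantum walk has an eigenvalue iff some trajectory is closed; for a
closed trajectory of minimal period `N`, each `λ` with `λN + β₀ + ⋯ + β_{N−1} ∈ 2πℤ` yields an
eigenvalue `e^{−iλ}` with eigenfunction supported on the trajectory, and there are exactly `N`
such eigenvalues. -/
theorem elastic_eigenvalues_and_closed_trajectories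
    (M₀ : ℤ) (hM₀ : 1 ≤ M₀)
    (σ : Site → Equiv.Perm Chir) (α : Site → Chir → ℝ)
    (hA1 : ∀ x, x ∉ innerDom M₀ → elasticCoin σ α x = 1)
    (S Cop : H →L[ℂ] H) (hS : IsShiftOp S) (hCop : IsCoinOp Cop (elasticCoin σ α))
    (Uel : unitary (H →L[ℂ] H)) (hUel : (Uel : H →L[ℂ] H) = S.comp Cop)
    (q : ℤ → Site → Chir → Site) (p : ℤ → Site → Chir → Chir)
    (htraj : IsTrajectory Uel q p) :
    ((∃ (z : ℂ) (u : H), u ≠ 0 ∧ (Uel : H →L[ℂ] H) u = z • u) ↔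
      (∃ (y : Site) (j : Chir) (t₁ t₂ : ℤ),
        t₁ < t₂ ∧ q t₁ y j = q t₂ y j ∧ p t₁ y j = p t₂ y j)) ∧
    ∀ (y : Site) (j : Chir) (N : ℕ), 1 ≤ N →
      (q (N : ℤ) y j = y ∧ p (N : ℤ) y j = j) →
      (∀ m : ℕ, 0 < m → m < N → ¬(q (m : ℤ) y j = y ∧ p (m : ℤ) y j = j)) →
      ((∀ lam : ℝ,
          (∃ n : ℤ, lam * N + ∑ t ∈ Finset.range N, α (q (t : ℤ) y j) (p (t : ℤ) y j)
              = 2 * Real.pi * n) →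
          ∃ u : H, u ≠ 0 ∧ (Uel : H →L[ℂ] H) u = Complex.exp (-(Complex.I * (lam : ℂ))) • u ∧
            ∀ (x : Site) (k : Chir),
              (x, k) ∉ {w : Site × Chir | ∃ t : ℕ, t < N ∧ w = (q (t : ℤ) y j, p (t : ℤ) y j)} →
              u x k = 0) ∧
        Set.ncard {z : ℂ | ∃ lam : ℝ, z = Complex.exp (-(Complex.I * (lam : ℂ))) ∧
            ∃ n : ℤ, lam * N + ∑ t ∈ Finset.range N, α (q (t : ℤ) y j) (p (t : ℤ) y j)
              = 2 * Real.pi * n} = N) :=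
  elastic_eigenvalues_and_closed_trajectories_general σ α S Cop hS hCop Uel hUel q p htraj

end QWPaper
end
end

section
/- Let U_el be an elastic quantum walk satisfying (A-1). (i) For every κ ∈ ℂ with Im κ < 0, the only outgoing solution u of U_el u = e^{−iκ}u is u = 0; thus elastic quantum walks have no resonances other than eigenvalues. (ii) If U_el is non-trapping (no trajectory is closed), then U_el has no eigenvalues. -/
noncomputable section

namespace QWPaper

open Complex

/-!
An elastic coin only permutes chiralities and multiplies by phases, so `U_el` transports
amplitudes, up to a phase, along a bijection of phase space `ℤ² × {←,→,↓,↑}`; both claims follow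
by tracking `|u|` along a single orbit.

For a solution of `U_el u = e^{-iκ} u`, each step backwards along the orbit multiplies `|u|` by
`e^{Im κ} < 1`. If `u` does not vanish at the starting point, `|u|` takes distinct values along the
backward orbit, which therefore leaves the finite box `Ω^i` for good. Off the box the coin is the
identity, so the orbit then runs straight back towards infinity on the side from which walkers of
its chirality come in, and there an outgoing `u` vanishes.

For an eigenvector of the unitary `U_el`, `|u|` is constant along every trajectory. A trajectory
that is not closed visits infinitely many points, whereas `u ∈ ℓ²` exceeds a positive level at
only finitely many, so `u` vanishes.
-/

open Function Filter

def chirDisp : Chir → Site := ![(-1, 0), (1, 0), (0, -1), (0, 1)]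

lemma ptShift_apply (v : Site → Chir → ℂ) (x : Site) (c : Chir) :
    ptShift v x c = v (x - chirDisp c) c := by
  fin_cases c <;> simp [ptShift, chirDisp] <;> congr 1 <;> ext <;> simp

def incomingCoord (w : Site × Chir) : ℤ :=
  -((chirDisp w.2).1 * w.1.1 + (chirDisp w.2).2 * w.1.2)

lemma incomingCoord_sub_chirDisp (x : Site) (c : Chir) :
    incomingCoord (x - chirDisp c, c) = incomingCoord (x, c) + 1 := by
  fin_cases c <;> simp [incomingCoord, chirDisp] <;> ring

lemma IsOutgoing.apply_eq_zero_of_lt_incomingCoord {M₀ : ℤ} {κ : ℂ} {u : Site → Chir → ℂ}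
    (hu : IsOutgoing M₀ κ u) {w : Site × Chir} (hw : M₀ < incomingCoord w) :
    uncurry u w = 0 := by
  obtain ⟨_, _, _, _, -, h0, h1, -, -, h2, h3, -⟩ := hu
  obtain ⟨x, c⟩ := w
  fin_cases c <;> simp [incomingCoord, chirDisp] at hw
  · exact h0 x hw
  · exact h1 x (by omega)
  · exact h2 x hw
  · exact h3 x (by omega)

lemma finite_innerDom (M₀ : ℤ) : (innerDom M₀).Finite :=
  (Set.finite_Icc ((-M₀, -M₀) : Site) (M₀, M₀)).subset fun _ hx =>
    ⟨⟨(abs_le.1 hx.1).1, (abs_le.1 hx.2).1⟩, ⟨(abs_le.1 hx.1).2, (abs_le.1 hx.2).2⟩⟩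

section ElasticWalk

variable {M₀ : ℤ} {σ : Site → Equiv.Perm Chir} {α : Site → Chir → ℝ}

lemma ptCoin_elasticCoin (u : Site → Chir → ℂ) (y : Site) (c : Chir) :
    ptCoin (elasticCoin σ α) u y c
      = Complex.exp (Complex.I * α y ((σ y).symm c)) * u y ((σ y).symm c) := by
  rw [ptCoin, Finset.sum_eq_single ((σ y).symm c)]
  · simp [elasticCoin]
  · intro j _ hj
    simp only [elasticCoin, Matrix.of_apply, ite_mul, zero_mul, ite_eq_right_iff]
    rintro rfl
    simp at hj
  · simp

lemma perm_eq_one_of_elasticCoin_eq_one {y : Site} (h : elasticCoin σ α y = 1) : σ y = 1 := by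
  refine Equiv.ext fun j => ?_
  rw [Equiv.Perm.one_apply]
  by_contra hne
  have hentry := congrFun (congrFun h (σ y j)) j
  simp [elasticCoin, Matrix.one_apply_ne hne, Complex.exp_ne_zero] at hentry

variable (σ) in
def prevStep : Site × Chir ≃ Site × Chir where
  toFun w := (w.1 - chirDisp w.2, (σ (w.1 - chirDisp w.2)).symm w.2)
  invFun w := (w.1 + chirDisp (σ w.1 w.2), σ w.1 w.2)
  left_inv := by rintro ⟨x, c⟩; simp
  right_inv := by rintro ⟨y, j⟩; simp

lemma norm_prevStep_of_isPtSolution {κ : ℂ} {u : Site → Chir → ℂ}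
    (hsol : IsPtSolution (elasticCoin σ α) κ u) (w : Site × Chir) :
    ‖uncurry u (prevStep σ w)‖ = Real.exp κ.im * ‖uncurry u w‖ := by
  have h := congrArg norm (hsol w.1 w.2)
  rw [ptWalk, ptShift_apply, ptCoin_elasticCoin, norm_mul, norm_mul, Complex.norm_exp,
    Complex.norm_exp] at h
  simpa [prevStep, uncurry] using h

lemma norm_iterate_prevStep_of_isPtSolution {κ : ℂ} {u : Site → Chir → ℂ}
    (hsol : IsPtSolution (elasticCoin σ α) κ u) (w : Site × Chir) (n : ℕ) :
    ‖uncurry u ((prevStep σ)^[n] w)‖ = Real.exp κ.im ^ n * ‖uncurry u w‖ := by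
  induction n with
  | zero => simp
  | succ n ih =>
    rw [iterate_succ_apply', norm_prevStep_of_isPtSolution hsol, ih, pow_succ']
    ring

lemma incomingCoord_prevStep (hA1 : ∀ x, x ∉ innerDom M₀ → elasticCoin σ α x = 1)
    {w : Site × Chir} (hw : (prevStep σ w).1 ∉ innerDom M₀) :
    incomingCoord (prevStep σ w) = incomingCoord w + 1 := by
  have hσ := perm_eq_one_of_elasticCoin_eq_one (hA1 _ hw)
  simp only [prevStep, Equiv.coe_fn_mk] at hσ ⊢
  rw [hσ]
  exact incomingCoord_sub_chirDisp _ _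

lemma incomingCoord_iterate_prevStep (hA1 : ∀ x, x ∉ innerDom M₀ → elasticCoin σ α x = 1)
    {w : Site × Chir} {N : ℕ} (hN : ∀ n > N, ((prevStep σ)^[n] w).1 ∉ innerDom M₀) (k : ℕ) :
    incomingCoord ((prevStep σ)^[N + k] w) = incomingCoord ((prevStep σ)^[N] w) + k := by
  induction k with
  | zero => simp
  | succ k ih =>
    have hout : (prevStep σ ((prevStep σ)^[N + k] w)).1 ∉ innerDom M₀ := by
      simpa [← add_assoc, iterate_succ_apply'] using hN (N + k + 1) (by omega)
    rw [← add_assoc, iterate_succ_apply', incomingCoord_prevStep hA1 hout, ih]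
    push_cast
    ring

theorem eq_zero_of_isOutgoing_of_isPtSolution
    (hA1 : ∀ x, x ∉ innerDom M₀ → elasticCoin σ α x = 1) {κ : ℂ} (hκ : κ.im < 0)
    {u : Site → Chir → ℂ} (hout : IsOutgoing M₀ κ u)
    (hsol : IsPtSolution (elasticCoin σ α) κ u) : u = 0 := by
  suffices ∀ w, uncurry u w = 0 from funext₂ fun x c => this (x, c)
  intro w
  by_contra hw
  have hnorm := norm_iterate_prevStep_of_isPtSolution hsol w
  -- `|u|` strictly decreases along the backward orbit, so the orbit never repeats
  have hf : Injective fun n => (prevStep σ)^[n] w := by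
    refine Injective.of_comp (f := fun w => ‖uncurry u w‖) ?_
    simp only [comp_def, hnorm]
    exact (mul_left_injective₀ (norm_ne_zero_iff.2 hw)).comp
      (pow_right_injective₀ (Real.exp_pos _) (Real.exp_lt_one_iff.2 hκ).ne)
  have hbox : ∀ᶠ n in atTop, (prevStep σ)^[n] w ∉ innerDom M₀ ×ˢ Set.univ :=
    Nat.cofinite_eq_atTop ▸ hf.tendsto_cofinite.eventually
      ((finite_innerDom M₀).prod Set.finite_univ).eventually_cofinite_notMem
  obtain ⟨N, hN⟩ := eventually_atTop.1 hbox
  have hflight := incomingCoord_iterate_prevStep hA1 (N := N) fun n hn h =>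
    hN n hn.le ⟨h, trivial⟩
  obtain ⟨k, hk⟩ : ∃ k : ℕ, M₀ < incomingCoord ((prevStep σ)^[N] w) + k :=
    ⟨(M₀ + 1 - incomingCoord ((prevStep σ)^[N] w)).toNat, by omega⟩
  have hzero := hout.apply_eq_zero_of_lt_incomingCoord ((hflight k).symm ▸ hk)
  rw [← norm_eq_zero, hnorm, mul_eq_zero] at hzero
  exact hw (norm_eq_zero.1 (hzero.resolve_left (by positivity)))

end ElasticWalk

section UnitaryEigenvector

variable {E : Type*} [NormedAddCommGroup E] [InnerProductSpace ℂ E] [CompleteSpace E]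
  (U : unitary (E →L[ℂ] E)) {z : ℂ} {u : E}

lemma norm_eq_one_of_apply_eq_smul (hu0 : u ≠ 0) (hu : (U : E →L[ℂ] E) u = z • u) :
    ‖z‖ = 1 := by
  have h := Unitary.norm_map U u
  rw [hu, norm_smul] at h
  exact (mul_eq_right₀ (norm_ne_zero_iff.2 hu0)).1 h

lemma coe_pow_apply_of_apply_eq_smul (hu : (U : E →L[ℂ] E) u = z • u) (t : ℕ) :
    ((U ^ t : unitary (E →L[ℂ] E)) : E →L[ℂ] E) u = z ^ t • u := by
  induction t with
  | zero => simp
  | succ t ih =>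
    rw [pow_succ, Submonoid.coe_mul, mul_apply_eq_comp, hu, map_smul, ih, smul_smul, pow_succ']

end UnitaryEigenvector

lemma finite_setOf_le_norm_apply {ι : Type*} {E : ι → Type*} [∀ i, NormedAddCommGroup (E i)]
    {p : ENNReal} (hp : 0 < p.toReal) (f : lp E p) {r : ℝ} (hr : 0 < r) :
    {i | r ≤ ‖f i‖}.Finite := by
  have h := ((lp.memℓp f).summable hp).tendsto_cofinite_zero.eventually
    (gt_mem_nhds (Real.rpow_pos_of_pos hr p.toReal))
  refine (Filter.eventually_cofinite.1 h).subset fun i hi => ?_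
  exact not_lt.2 (Real.rpow_le_rpow hr.le hi hp.le)

lemma apply_eq_zero_of_injective_of_norm_eq (u : H) {g : ℕ → Site × Chir} (hg : Injective g)
    {y : Site} {j : Chir} (h : ∀ t, ‖u (g t).1 (g t).2‖ = ‖u y j‖) : u y j = 0 := by
  by_contra hyj
  have hfin := (finite_setOf_le_norm_apply (by norm_num) u (norm_pos_iff.2 hyj)).prod
    (Set.finite_univ (α := Chir))
  refine Set.infinite_range_of_injective hg (hfin.subset ?_)
  rintro _ ⟨t, rfl⟩
  exact ⟨(h t).symm.trans_le (PiLp.norm_apply_le _ _), trivial⟩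

lemma inner_deltaState (y : Site) (j : Chir) (w : H) : inner ℂ (deltaState y j) w = w y j := by
  simp [deltaState, lp.inner_single_left, EuclideanSpace.inner_single_left]

lemma IsTrajectory.norm_apply_eq_of_apply_eq_smul {U : unitary (H →L[ℂ] H)}
    {q : ℤ → Site → Chir → Site} {p : ℤ → Site → Chir → Chir} (htraj : IsTrajectory U q p)
    {z : ℂ} (hz : ‖z‖ = 1) {u : H} (hu : (U : H →L[ℂ] H) u = z • u)
    (y : Site) (j : Chir) (t : ℕ) :
    ‖u (q t y j) (p t y j)‖ = ‖u y j‖ := by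
  obtain ⟨c, hc, hUt⟩ := htraj.2 t y j
  have h := Unitary.inner_map_map (U ^ t) (deltaState y j) u
  rw [zpow_natCast] at hUt
  rw [hUt, coe_pow_apply_of_apply_eq_smul U hu, inner_smul_left, inner_smul_right,
    inner_deltaState, inner_deltaState] at h
  simpa [hc, hz] using congrArg norm h

lemma injective_trajectory_of_not_closed {q : ℤ → Site → Chir → Site}
    {p : ℤ → Site → Chir → Chir} {y : Site} {j : Chir}
    (hnt : ¬∃ t₁ t₂ : ℤ, t₁ < t₂ ∧ q t₁ y j = q t₂ y j ∧ p t₁ y j = p t₂ y j) :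
    Injective fun t : ℕ => (q t y j, p t y j) :=
  Injective.of_lt_imp_ne fun a b hab heq =>
    hnt ⟨a, b, by exact_mod_cast hab, congrArg Prod.fst heq, congrArg Prod.snd heq⟩

theorem elastic_no_resonances_and_nontrapping_no_eigenvalues_general
    (M₀ : ℤ)
    (σ : Site → Equiv.Perm Chir) (α : Site → Chir → ℝ)
    (hA1 : ∀ x, x ∉ innerDom M₀ → elasticCoin σ α x = 1)
    (Uel : unitary (H →L[ℂ] H))
    (q : ℤ → Site → Chir → Site) (p : ℤ → Site → Chir → Chir)
    (htraj : IsTrajectory Uel q p) :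
    (∀ κ : ℂ, κ.im < 0 → ∀ u : Site → Chir → ℂ, IsOutgoing M₀ κ u →
      IsPtSolution (elasticCoin σ α) κ u → ∀ (x : Site) (i : Chir), u x i = 0) ∧
    ((∀ (y : Site) (j : Chir),
        ¬∃ t₁ t₂ : ℤ, t₁ < t₂ ∧ q t₁ y j = q t₂ y j ∧ p t₁ y j = p t₂ y j) →
      ∀ (z : ℂ) (u : H), (Uel : H →L[ℂ] H) u = z • u → u = 0) := by
  refine ⟨fun κ hκ u hout hsol => ?_, fun hnt z u hu => ?_⟩
  · exact congrFun₂ (eq_zero_of_isOutgoing_of_isPtSolution hA1 hκ hout hsol)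
  · by_cases hu0 : u = 0
    · exact hu0
    have hz := norm_eq_one_of_apply_eq_smul Uel hu0 hu
    ext y j
    exact apply_eq_zero_of_injective_of_norm_eq u (injective_trajectory_of_not_closed (hnt y j))
      (htraj.norm_apply_eq_of_apply_eq_smul hz hu y j)

/-- elastic quantum walks have no resonances other than eigenvalues (the only
outgoing solution for `Im κ < 0` is `0`), and non-trapping elastic walks have no eigenvalues. -/
theorem elastic_no_resonances_and_nontrapping_no_eigenvalues
    (M₀ : ℤ) (hM₀ : 1 ≤ M₀)
    (σ : Site → Equiv.Perm Chir) (α : Site → Chir → ℝ)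
    (hA1 : ∀ x, x ∉ innerDom M₀ → elasticCoin σ α x = 1)
    (S Cop : H →L[ℂ] H) (hS : IsShiftOp S) (hCop : IsCoinOp Cop (elasticCoin σ α))
    (Uel : unitary (H →L[ℂ] H)) (hUel : (Uel : H →L[ℂ] H) = S.comp Cop)
    (q : ℤ → Site → Chir → Site) (p : ℤ → Site → Chir → Chir)
    (htraj : IsTrajectory Uel q p) :
    (∀ κ : ℂ, κ.im < 0 → ∀ u : Site → Chir → ℂ, IsOutgoing M₀ κ u →
      IsPtSolution (elasticCoin σ α) κ u → ∀ (x : Site) (i : Chir), u x i = 0) ∧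
    ((∀ (y : Site) (j : Chir),
        ¬∃ t₁ t₂ : ℤ, t₁ < t₂ ∧ q t₁ y j = q t₂ y j ∧ p t₁ y j = p t₂ y j) →
      ∀ (z : ℂ) (u : H), (Uel : H →L[ℂ] H) u = z • u → u = 0) :=
  elastic_no_resonances_and_nontrapping_no_eigenvalues_general M₀ σ α hA1 Uel q p htraj

end QWPaper
end
end

section
/- Let U_np = U_i ⊕ U_e be a quantum walk with a non-penetrable barrier and fix θ ∈ ℂ with Im θ < 0. For every κ ∈ ℂ with Im κ > Im θ, the operator U_e(θ) − e^{−iκ}·Id is boundedly invertible on H_e (in particular U_e has no resonances), and for every compact set Z ⊂ {κ ∈ ℂ : Im κ > Im θ} there exists γ > 0, depending only on Z, such that ‖(U_e(θ) − e^{−iκ})^{−1}‖_{B(H_e)} ≤ γ for all κ ∈ Z. -/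
noncomputable section

/-!
An element of `H_e` vanishes on `Ω^i \ K`, off `Ω^i` the translated coin `D_x(θ) C(x) D_x(θ)⁻¹`
is the identity, and at a barrier site the element carries a single chirality `j`, for which
`|D_x(θ)_{jj}| = e^{-Im θ · M₀}` is the largest diagonal weight (as `Im θ < 0`). Column `j` of the
translated coin is column `j` of the unitary `C(x)` with entries scaled by factors of modulus
at most one, so the translated coin is a contraction on `H_e`; the shift being unitary,
`‖U_e(θ) u‖ ≤ e^{Im θ} ‖u‖ < |e^{-iκ}| ‖u‖`. Hence `U_e(θ) - e^{-iκ}` is invertible on the closed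
invariant subspace `H_e`, with inverse of norm at most `(e^{Im κ} - e^{Im θ})⁻¹`, which is bounded
on compact subsets of `{Im κ > Im θ}`.
-/

open scoped ENNReal

namespace lp

variable {α : Type*} {E : α → Type*} [∀ a, NormedAddCommGroup (E a)]

lemma hasSum_norm_sq (u : lp E 2) : HasSum (fun a => ‖u a‖ ^ 2) (‖u‖ ^ 2) := by
  simpa [Real.rpow_two] using lp.hasSum_norm (p := 2) (by norm_num) u

lemma norm_le_norm_of_forall_le {p : ℝ≥0∞} (hp : 0 < p.toReal) {u v : lp E p}
    (h : ∀ a, ‖u a‖ ≤ ‖v a‖) : ‖u‖ ≤ ‖v‖ := by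
  have := hasSum_le (fun a => Real.rpow_le_rpow (norm_nonneg _) (h a) hp.le)
    (lp.hasSum_norm hp u) (lp.hasSum_norm hp v)
  exact (Real.rpow_le_rpow_iff (lp.norm_nonneg' _) (lp.norm_nonneg' _) hp).mp this

variable {𝕜 ι : Type*} [RCLike 𝕜] [Fintype ι]

lemma norm_sq_eq_sum_tsum (u : lp (fun _ : α => EuclideanSpace 𝕜 ι) 2) :
    ‖u‖ ^ 2 = ∑ i, ∑' a, ‖u a i‖ ^ 2 := by
  have hu := hasSum_norm_sq u
  have hsum : ∀ i, Summable fun a => ‖u a i‖ ^ 2 := fun i =>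
    hu.summable.of_nonneg_of_le (fun _ => by positivity) fun a => by
      gcongr; exact PiLp.norm_apply_le (u a) i
  rw [← Summable.tsum_finsetSum fun i _ => hsum i, ← hu.tsum_eq]
  simp only [EuclideanSpace.norm_sq_eq]

lemma norm_eq_of_apply_eq_apply_equiv {u v : lp (fun _ : α => EuclideanSpace 𝕜 ι) 2}
    (τ : ι → α ≃ α) (h : ∀ a i, v a i = u (τ i a) i) : ‖v‖ = ‖u‖ := by
  refine (sq_eq_sq₀ (norm_nonneg _) (norm_nonneg _)).mp ?_
  simp only [norm_sq_eq_sum_tsum, h]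
  exact Finset.sum_congr rfl fun i _ => (τ i).tsum_eq fun a => ‖u a i‖ ^ 2

end lp

lemma Matrix.sum_norm_sq_apply_of_mem_unitaryGroup {ι 𝕜 : Type*} [Fintype ι] [DecidableEq ι]
    [RCLike 𝕜] {U : Matrix ι ι 𝕜} (hU : U ∈ Matrix.unitaryGroup ι 𝕜) (j : ι) :
    ∑ i, ‖U i j‖ ^ 2 = 1 := by
  have h : (star U * U) j j = 1 := by rw [Unitary.star_mul_self_of_mem hU, Matrix.one_apply_eq]
  simp only [Matrix.mul_apply, Matrix.star_apply, RCLike.star_def, RCLike.conj_mul] at h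
  exact_mod_cast h

lemma Matrix.diagonal_mul_mul_inv_diagonal_apply {ι K : Type*} [Fintype ι] [DecidableEq ι]
    [Field K] {d : ι → K} (hd : ∀ i, d i ≠ 0) (A : Matrix ι ι K) (i j : ι) :
    (Matrix.diagonal d * A * (Matrix.diagonal d)⁻¹) i j = d i * A i j / d j := by
  have hinv : (Matrix.diagonal d)⁻¹ = Matrix.diagonal fun i => (d i)⁻¹ := by
    refine Matrix.inv_eq_right_inv ?_
    rw [Matrix.diagonal_mul_diagonal]
    simp [hd]
  rw [hinv, Matrix.mul_diagonal, Matrix.diagonal_mul, div_eq_mul_inv]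

lemma Matrix.sum_norm_sq_diagonal_mul_mul_inv_diagonal_apply_le {ι 𝕜 : Type*} [Fintype ι]
    [DecidableEq ι] [RCLike 𝕜] {U : Matrix ι ι 𝕜} (hU : U ∈ Matrix.unitaryGroup ι 𝕜)
    {d : ι → 𝕜} (hd : ∀ i, d i ≠ 0) {j : ι} (hj : ∀ i, ‖d i‖ ≤ ‖d j‖) :
    ∑ i, ‖(Matrix.diagonal d * U * (Matrix.diagonal d)⁻¹) i j‖ ^ 2 ≤ 1 := by
  have hentry : ∀ i, ‖(Matrix.diagonal d * U * (Matrix.diagonal d)⁻¹) i j‖ ≤ ‖U i j‖ := by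
    intro i
    rw [Matrix.diagonal_mul_mul_inv_diagonal_apply hd, norm_div, norm_mul, mul_comm,
      mul_div_assoc]
    exact mul_le_of_le_one_right (norm_nonneg _)
      ((div_le_one (norm_pos_iff.mpr (hd j))).mpr (hj i))
  calc ∑ i, ‖(Matrix.diagonal d * U * (Matrix.diagonal d)⁻¹) i j‖ ^ 2
      ≤ ∑ i, ‖U i j‖ ^ 2 := by gcongr with i; exact hentry i
    _ = 1 := Matrix.sum_norm_sq_apply_of_mem_unitaryGroup hU j

lemma EuclideanSpace.norm_le_of_apply_eq_sum_mul {ι 𝕜 : Type*} [Fintype ι] [RCLike 𝕜]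
    {M : Matrix ι ι 𝕜} {v w : EuclideanSpace 𝕜 ι} (hw : ∀ i, w i = ∑ k, M i k * v k)
    {j : ι} (hv : ∀ k, k ≠ j → v k = 0) (hM : ∑ i, ‖M i j‖ ^ 2 ≤ 1) : ‖w‖ ≤ ‖v‖ := by
  have hwj : ∀ i, w i = M i j * v j := fun i => by
    rw [hw i, Finset.sum_eq_single j (fun k _ hk => by rw [hv k hk, mul_zero]) (by simp)]
  refine (sq_le_sq₀ (norm_nonneg _) (norm_nonneg _)).mp ?_
  calc ‖w‖ ^ 2 = (∑ i, ‖M i j‖ ^ 2) * ‖v j‖ ^ 2 := by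
        simp only [EuclideanSpace.norm_sq_eq, hwj, norm_mul, mul_pow, Finset.sum_mul]
    _ ≤ ‖v j‖ ^ 2 := mul_le_of_le_one_left (by positivity) hM
    _ ≤ ‖v‖ ^ 2 := by gcongr; exact PiLp.norm_apply_le v j

section Resolvent

variable {𝕜 E : Type*} [NontriviallyNormedField 𝕜] [NormedAddCommGroup E] [NormedSpace 𝕜 E]

lemma norm_le_inv_mul_norm_sub_smul {u v : E} {r : ℝ} {z : 𝕜} (hz : r < ‖z‖)
    (hv : ‖v‖ ≤ r * ‖u‖) : ‖u‖ ≤ (‖z‖ - r)⁻¹ * ‖v - z • u‖ := by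
  rw [le_inv_mul_iff₀ (sub_pos.mpr hz), sub_mul, norm_sub_rev, ← norm_smul]
  linarith [norm_sub_norm_le (z • u) v]

lemma Submodule.exists_mem_apply_sub_smul_eq (T : E →L[𝕜] E) {F : Submodule 𝕜 E}
    [CompleteSpace F] (hTF : ∀ u ∈ F, T u ∈ F) {r : ℝ} (hr : 0 ≤ r)
    (hT : ∀ u ∈ F, ‖T u‖ ≤ r * ‖u‖) {z : 𝕜} (hz : r < ‖z‖) {f : E} (hf : f ∈ F) :
    ∃ u ∈ F, T u - z • u = f := by
  have hTF_norm : ‖T.restrict hTF‖ * ‖(1 : F →L[𝕜] F)‖ < ‖z‖ :=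
    (mul_le_of_le_one_right (norm_nonneg _) ContinuousLinearMap.norm_id_le).trans_lt
      (((T.restrict hTF).opNorm_le_bound hr fun u => hT u u.2).trans_lt hz)
  obtain ⟨u, hu⟩ := (ContinuousLinearMap.isUnit_iff_bijective.mp
    (spectrum.mem_resolventSet_of_norm_lt_mul hTF_norm)).2 ⟨-f, F.neg_mem hf⟩
  refine ⟨u, u.2, ?_⟩
  have hu' : z • (u : E) - T u = -f := by
    simpa [Algebra.algebraMap_eq_smul_one] using congrArg Subtype.val hu
  rw [← neg_sub, hu', neg_neg]

end Resolvent

namespace QWPaper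

open Complex

def signedCoord (x : Site) : Chir → ℤ := ![x.1, -x.1, x.2, -x.2]

lemma Dmat_eq_diagonal (θ : ℂ) (x : Site) :
    Dmat θ x = Matrix.diagonal fun i => exp (I * θ * signedCoord x i) := by
  unfold Dmat
  congr 1
  funext i
  fin_cases i <;> simp [signedCoord]

lemma norm_exp_I_mul_mul_intCast (θ : ℂ) (n : ℤ) :
    ‖exp (I * θ * n)‖ = Real.exp (-θ.im * n) := by
  simp [Complex.norm_exp, Complex.mul_re]

lemma transCoin_of_eq_one {θ : ℂ} {C : Site → Matrix Chir Chir ℂ} {x : Site} (hx : C x = 1) :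
    transCoin θ C x = 1 := by
  ext i j
  rw [transCoin, Dmat_eq_diagonal, Matrix.diagonal_mul_mul_inv_diagonal_apply
    (fun _ => exp_ne_zero _), hx, Matrix.one_apply]
  split_ifs with h <;> simp [h]

lemma sum_norm_sq_transCoin_apply_le {θ : ℂ} (hθ : θ.im ≤ 0) {C : Site → Matrix Chir Chir ℂ}
    (hC : IsUnitaryCoin C) {x : Site} {j : Chir}
    (hj : ∀ i, signedCoord x i ≤ signedCoord x j) :
    ∑ i, ‖transCoin θ C x i j‖ ^ 2 ≤ 1 := by
  rw [transCoin, Dmat_eq_diagonal]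
  refine Matrix.sum_norm_sq_diagonal_mul_mul_inv_diagonal_apply_le (hC x)
    (fun _ => exp_ne_zero _) fun i => ?_
  rw [norm_exp_I_mul_mul_intCast, norm_exp_I_mul_mul_intCast, Real.exp_le_exp]
  exact mul_le_mul_of_nonneg_left (by exact_mod_cast hj i) (neg_nonneg.mpr hθ)

lemma signedCoord_le {M₀ : ℤ} {x : Site} (hx : x ∈ innerDom M₀) (i : Chir) :
    signedCoord x i ≤ M₀ := by
  simp only [innerDom, Set.mem_ofPred_eq, abs_le] at hx
  fin_cases i <;> simp [signedCoord] <;> omega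

lemma memHe.signedCoord_eq_of_apply_ne_zero {M₀ : ℤ} {u : H} (hu : memHe M₀ u) {x : Site}
    (hx : x ∈ innerDom M₀) {i : Chir} (hi : u x i ≠ 0) :
    signedCoord x i = M₀ ∧ ∀ k, k ≠ i → signedCoord x k ≠ M₀ := by
  obtain ⟨hout, h0, h1, h2, h3⟩ := hu
  have hK : x ∈ outerDom M₀ := by_contra fun h => hi (hout x h i)
  simp only [innerDom, outerDom, Kbar, K1p, K1m, K2p, K2m, Set.mem_union, Set.mem_ofPred_eq,
    abs_le] at hx hK h0 h1 h2 h3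
  fin_cases i <;> [have := mt (h0 x) hi; have := mt (h1 x) hi; have := mt (h2 x) hi;
    have := mt (h3 x) hi] <;> refine ⟨by simp [signedCoord]; omega, fun k hk => ?_⟩ <;>
    fin_cases k <;> first | exact absurd rfl hk | (simp [signedCoord]; omega)

lemma memHe.exists_dominant_chirality {M₀ : ℤ} {u : H} (hu : memHe M₀ u) {x : Site}
    (hx : x ∈ innerDom M₀) :
    ∃ j, (∀ i, signedCoord x i ≤ signedCoord x j) ∧ ∀ i, i ≠ j → u x i = 0 := by
  by_cases hzero : ∀ i, u x i = 0
  · obtain ⟨j, hj⟩ := Finite.exists_max (signedCoord x)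
    exact ⟨j, hj, fun i _ => hzero i⟩
  obtain ⟨j, hj⟩ := not_forall.mp hzero
  obtain ⟨hjM, -⟩ := hu.signedCoord_eq_of_apply_ne_zero hx hj
  refine ⟨j, fun i => hjM ▸ signedCoord_le hx i, fun i hij => by_contra fun hi => ?_⟩
  exact (hu.signedCoord_eq_of_apply_ne_zero hx hi).2 j (Ne.symm hij) hjM

def shiftStep : Chir → Site := ![(1, 0), (-1, 0), (0, 1), (0, -1)]

lemma IsShiftOp.apply_eq {S : H →L[ℂ] H} (hS : IsShiftOp S) (u : H) (x : Site) (i : Chir) :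
    S u x i = u (x + shiftStep i) i := by
  obtain ⟨h0, h1, h2, h3⟩ := hS u x
  fin_cases i <;> simp [shiftStep, Prod.add_def, h0, h1, h2, h3, sub_eq_add_neg]

lemma IsShiftOp.norm_apply {S : H →L[ℂ] H} (hS : IsShiftOp S) (u : H) : ‖S u‖ = ‖u‖ :=
  lp.norm_eq_of_apply_eq_apply_equiv (fun i => Equiv.addRight (shiftStep i)) (hS.apply_eq u)

lemma IsCoinOp.norm_apply_le_of_memHe {θ : ℂ} (hθ : θ.im ≤ 0) {M₀ : ℤ}
    {C : Site → Matrix Chir Chir ℂ} (hC : IsUnitaryCoin C) (hA1 : SatisfiesA1 C M₀)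
    {Mθ : H →L[ℂ] H} (hMθ : IsCoinOp Mθ (transCoin θ C)) {u : H} (hu : memHe M₀ u) :
    ‖Mθ u‖ ≤ ‖u‖ := by
  refine lp.norm_le_norm_of_forall_le (by norm_num) fun x => ?_
  by_cases hx : x ∈ innerDom M₀
  · obtain ⟨j, hj, hsupp⟩ := hu.exists_dominant_chirality hx
    exact EuclideanSpace.norm_le_of_apply_eq_sum_mul (hMθ u x) hsupp
      (sum_norm_sq_transCoin_apply_le hθ hC hj)
  · have hcoin : Mθ u x = u x := by
      ext i
      simp [hMθ u x i, transCoin_of_eq_one (hA1.2 x hx), Matrix.one_apply]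
    rw [hcoin]

lemma norm_exp_neg_I_mul (κ : ℂ) : ‖exp (-(I * κ))‖ = Real.exp κ.im := by
  simp [Complex.norm_exp]

lemma norm_transWalkOp_apply_le {θ : ℂ} (hθ : θ.im ≤ 0) {M₀ : ℤ}
    {C : Site → Matrix Chir Chir ℂ} (hC : IsUnitaryCoin C) (hA1 : SatisfiesA1 C M₀)
    {S Mθ : H →L[ℂ] H} (hS : IsShiftOp S) (hMθ : IsCoinOp Mθ (transCoin θ C)) {u : H}
    (hu : memHe M₀ u) : ‖transWalkOp θ S Mθ u‖ ≤ Real.exp θ.im * ‖u‖ := by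
  rw [transWalkOp, smul_apply, norm_smul, ContinuousLinearMap.comp_apply,
    hS.norm_apply, norm_exp_neg_I_mul]
  gcongr
  exact hMθ.norm_apply_le_of_memHe hθ hC hA1 hu

def exteriorSubspace (M₀ : ℤ) : Submodule ℂ H where
  carrier := {u | memHe M₀ u}
  add_mem' {u v} hu hv := by simp_all [memHe]
  zero_mem' := by simp [memHe]
  smul_mem' c u hu := by simp_all [memHe]

lemma isClosed_exteriorSubspace (M₀ : ℤ) : IsClosed (exteriorSubspace M₀ : Set H) := by
  have hcoord : ∀ x i, IsClosed {u : H | u x i = 0} := fun x i =>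
    isClosed_eq ((PiLp.continuous_apply 2 _ i).comp (lp.lipschitzWith_one_eval 2 x).continuous)
      continuous_const
  have hcoords : ∀ (s : Set Site) (i : Chir), IsClosed {u : H | ∀ x ∈ s, u x i = 0} := by
    intro s i
    simp only [Set.ofPred_forall]
    exact isClosed_iInter fun x => isClosed_iInter fun _ => hcoord x i
  have hout : IsClosed {u : H | ∀ x, x ∉ outerDom M₀ → ∀ i : Chir, u x i = 0} := by
    simp only [Set.ofPred_forall]
    exact isClosed_iInter fun x => isClosed_iInter fun _ => isClosed_iInter fun i => hcoord x i
  change IsClosed {u : H | memHe M₀ u}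
  simp only [memHe, Set.ofPred_and]
  exact hout.inter ((hcoords _ 0).inter ((hcoords _ 1).inter ((hcoords _ 2).inter (hcoords _ 3))))

theorem exterior_resolvent_estimate_general
    (M₀ : ℤ) (Cnp : Site → Matrix Chir Chir ℂ)
    (hCnp : IsUnitaryCoin Cnp) (hA1 : SatisfiesA1 Cnp M₀)
    (S : H →L[ℂ] H) (hS : IsShiftOp S)
    (θ : ℂ) (hθ : θ.im < 0)
    (Mθ : H →L[ℂ] H) (hMθ : IsCoinOp Mθ (transCoin θ Cnp))
    (heInvθ : ∀ u : H, memHe M₀ u → memHe M₀ ((transWalkOp θ S Mθ) u)) :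
    (∀ κ : ℂ, θ.im < κ.im →
      (∀ u : H, memHe M₀ u →
        (transWalkOp θ S Mθ) u = Complex.exp (-(Complex.I * κ)) • u → u = 0) ∧
      (∀ f : H, memHe M₀ f → ∃ u : H, memHe M₀ u ∧
        (transWalkOp θ S Mθ) u - Complex.exp (-(Complex.I * κ)) • u = f)) ∧
    ∀ Z : Set ℂ, IsCompact Z → Z ⊆ {κ : ℂ | θ.im < κ.im} →
      ∃ γ > (0 : ℝ), ∀ κ ∈ Z, ∀ u f : H, memHe M₀ u → memHe M₀ f →
        (transWalkOp θ S Mθ) u - Complex.exp (-(Complex.I * κ)) • u = f →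
        ‖u‖ ≤ γ * ‖f‖ := by
  set T := transWalkOp θ S Mθ
  have hT : ∀ u, memHe M₀ u → ‖T u‖ ≤ Real.exp θ.im * ‖u‖ := fun u hu =>
    norm_transWalkOp_apply_le hθ.le hCnp hA1 hS hMθ hu
  have hgap : ∀ κ : ℂ, θ.im < κ.im → Real.exp θ.im < ‖exp (-(I * κ))‖ := fun κ hκ => by
    rwa [norm_exp_neg_I_mul, Real.exp_lt_exp]
  have : CompleteSpace (exteriorSubspace M₀) := (isClosed_exteriorSubspace M₀).completeSpace_coe
  refine ⟨fun κ hκ => ⟨fun u hu hTu => ?_, fun f hf => ?_⟩, fun Z hZ hZθ => ?_⟩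
  · have := norm_le_inv_mul_norm_sub_smul (hgap κ hκ) (hT u hu)
    rwa [hTu, sub_self, norm_zero, mul_zero, norm_le_zero_iff] at this
  · exact Submodule.exists_mem_apply_sub_smul_eq T (F := exteriorSubspace M₀) heInvθ
      (Real.exp_nonneg _) hT (hgap κ hκ) hf
  · obtain ⟨a, ha, haZ⟩ := hZ.exists_forall_le' continuous_im.continuousOn hZθ
    have ha' : 0 < Real.exp a - Real.exp θ.im := sub_pos.mpr (Real.exp_lt_exp.mpr ha)
    refine ⟨(Real.exp a - Real.exp θ.im)⁻¹, inv_pos.mpr ha', fun κ hκ u f hu _ hf => ?_⟩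
    calc ‖u‖ ≤ (‖exp (-(I * κ))‖ - Real.exp θ.im)⁻¹ * ‖T u - exp (-(I * κ)) • u‖ :=
          norm_le_inv_mul_norm_sub_smul (hgap κ (hZθ hκ)) (hT u hu)
      _ ≤ (Real.exp a - Real.exp θ.im)⁻¹ * ‖f‖ := by
          rw [hf, norm_exp_neg_I_mul]
          gcongr
          exact haZ κ hκ

/-- the translated exterior walk `U_e(θ) − e^{−iκ}` is boundedly invertible on
`H_e` for every `Im κ > Im θ` (so `U_e` has no resonances), with a resolvent bound uniform on
compact subsets of `{Im κ > Im θ}`. -/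
theorem exterior_resolvent_estimate
    (M₀ : ℤ) (Cnp : Site → Matrix Chir Chir ℂ)
    (hCnp : IsUnitaryCoin Cnp) (hA1 : SatisfiesA1 Cnp M₀)
    (S Cop : H →L[ℂ] H) (hS : IsShiftOp S) (hCop : IsCoinOp Cop Cnp)
    (hUnit : S.comp Cop ∈ unitary (H →L[ℂ] H))
    (hbar : IsBarrierWalk M₀ (S.comp Cop))
    (heInv : ∀ u : H, memHe M₀ u → memHe M₀ ((S.comp Cop) u))
    (θ : ℂ) (hθ : θ.im < 0)
    (Mθ : H →L[ℂ] H) (hMθ : IsCoinOp Mθ (transCoin θ Cnp))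
    (heInvθ : ∀ u : H, memHe M₀ u → memHe M₀ ((transWalkOp θ S Mθ) u)) :
    (∀ κ : ℂ, θ.im < κ.im →
      (∀ u : H, memHe M₀ u →
        (transWalkOp θ S Mθ) u = Complex.exp (-(Complex.I * κ)) • u → u = 0) ∧
      (∀ f : H, memHe M₀ f → ∃ u : H, memHe M₀ u ∧
        (transWalkOp θ S Mθ) u - Complex.exp (-(Complex.I * κ)) • u = f)) ∧
    ∀ Z : Set ℂ, IsCompact Z → Z ⊆ {κ : ℂ | θ.im < κ.im} →
      ∃ γ > (0 : ℝ), ∀ κ ∈ Z, ∀ u f : H, memHe M₀ u → memHe M₀ f →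
        (transWalkOp θ S Mθ) u - Complex.exp (-(Complex.I * κ)) • u = f →
        ‖u‖ ≤ γ * ‖f‖ :=
  exterior_resolvent_estimate_general M₀ Cnp hCnp hA1 S hS θ hθ Mθ hMθ heInvθ

end QWPaper
end
end

section
/- Fix ε ∈ (0,1] and let U_ε be a perturbed four-corner quantum walk. For every κ ∈ ℂ with Im κ ≤ 0, there exists a nonzero outgoing solution u of U_ε u = e^{−iκ}u if and only if e^{−2i(m₀+n₀)κ} ∈ {c_ε⁺, c_ε⁻}. Moreover, any outgoing solution that vanishes at every point of the images of the two closed trajectories Φ₊ and Φ₋ is identically zero; consequently, for each of c_ε⁺ and c_ε⁻ there are exactly 2(m₀+n₀) values of κ modulo 2π (so in total 4(m₀+n₀) counted with multiplicity) at which eigenvalues or resonances of U_ε occur. -/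
noncomputable section

namespace QWPaper

open Complex

/-!
Write `λ = e^{-iκ}` and let `dir j` be the lattice step of chirality `j`. Off the four corners
the coin is trivial, so a solution of `U u = λ u` satisfies `u(y)_j = λ u(y + dir j)_j` there:
each chirality is a geometric sequence along its line until it meets a corner. An outgoing
solution therefore vanishes on every ray with no corner behind it, and, going forward from the
nearest corner behind, it vanishes everywhere once it vanishes at the corners.

The vanishing entries of `C_ε` keep `Φ₊` and `Φ₋` from mixing at the corners, so following `Φ₊`
once around the rectangle gives `λ^{2(m₀+n₀)} u_←(0,0) = c_ε⁺ u_←(0,0)`, and vanishing of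
`u_←(0,0)` propagates to every corner value of `Φ₊`; the same holds for `Φ₋`, `u_↓(0,0)` and
`c_ε⁻`. Hence a nonzero outgoing solution forces `λ^{2(m₀+n₀)} ∈ {c_ε⁺, c_ε⁻}`. Conversely, if
`λ^{2(m₀+n₀)} = c_ε⁺`, an explicit mode living on the four lines through the edges of the
rectangle is an outgoing solution; the case `c_ε⁻` follows by reflecting in the diagonal, which
swaps `m₀` with `n₀` and `Φ₊` with `Φ₋`. Finally `0 < |c_ε^±| ≤ 1`, so the values
`λ = e^{-iκ}` with `Im κ ≤ 0` and `λ^{2(m₀+n₀)} = c_ε^±` are all `2(m₀+n₀)` roots of `c_ε^±`.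
-/

open Complex

def dir : Chir → Site := ![(-1, 0), (1, 0), (0, -1), (0, 1)]

section Transport

variable {C : Site → Matrix Chir Chir ℂ} {κ : ℂ} {u : Site → Chir → ℂ} {K : Set Site}

lemma ptWalk_apply (x : Site) (i : Chir) : ptWalk C u x i = ptCoin C u (x - dir i) i := by
  obtain ⟨p, q⟩ := x
  fin_cases i <;> simp [ptWalk, ptShift, dir, sub_eq_add_neg]

lemma isPtSolution_iff :
    IsPtSolution C κ u ↔ ∀ y i, ptCoin C u y i = exp (-(I * κ)) * u (y + dir i) i := by
  simp only [IsPtSolution, ptWalk_apply]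
  exact ⟨fun h y i => by simpa using h (y + dir i) i, fun h x i => by simpa using h (x - dir i) i⟩

lemma ptCoin_of_eq_one {y : Site} (h : C y = 1) (i : Chir) : ptCoin C u y i = u y i := by
  simp [ptCoin, h, Matrix.one_apply]

lemma IsPtSolution.apply_eq_pow_mul_apply (hsol : IsPtSolution C κ u)
    (hK : ∀ y ∉ K, C y = 1) {y : Site} {i : Chir} :
    ∀ k : ℕ, (∀ j < k, y + j • dir i ∉ K) →
      u y i = exp (-(I * κ)) ^ k * u (y + k • dir i) i
  | 0, _ => by simp
  | k + 1, h => by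
    have hstep := isPtSolution_iff.mp hsol (y + k • dir i) i
    rw [ptCoin_of_eq_one (hK _ (h k k.lt_succ_self))] at hstep
    rw [hsol.apply_eq_pow_mul_apply hK k fun j hj => h j (hj.trans k.lt_succ_self), hstep,
      pow_succ, succ_nsmul, add_assoc, mul_assoc]

lemma IsPtSolution.pow_mul_apply_eq_ptCoin (hsol : IsPtSolution C κ u)
    (hK : ∀ y ∉ K, C y = 1) {z z' : Site} {i : Chir} {L : ℕ} (hL : 0 < L)
    (hz' : z + L • dir i = z') (hfree : ∀ j : ℕ, 0 < j → j < L → z + j • dir i ∉ K) :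
    exp (-(I * κ)) ^ L * u z' i = ptCoin C u z i := by
  obtain ⟨L, rfl⟩ : ∃ L', L = L' + 1 := ⟨L - 1, by omega⟩
  have ht := hsol.apply_eq_pow_mul_apply hK (y := z + dir i) (i := i) L fun j hj => by
    rw [add_assoc, ← succ_nsmul']
    exact hfree (j + 1) (by omega) (by omega)
  rw [isPtSolution_iff.mp hsol z i, ht, ← hz', add_assoc z, ← succ_nsmul', pow_succ]
  ring

lemma IsOutgoing.exists_eq_zero_behind {M : ℤ} (hout : IsOutgoing M κ u) (x : Site)
    (i : Chir) : ∃ k : ℕ, u (x - k • dir i) i = 0 := by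
  obtain ⟨-, -, -, -, -, h0, h1, -, -, h2, h3, -⟩ := hout
  refine ⟨(M + |x.1| + |x.2| + 1).toNat, ?_⟩
  obtain ⟨p, q⟩ := x
  have hk := Int.self_le_toNat (M + |p| + |q| + 1)
  fin_cases i
  exacts [h0 _ (by simp [dir]; grind), h1 _ (by simp [dir]; grind),
    h2 _ (by simp [dir]; grind), h3 _ (by simp [dir]; grind)]

lemma IsPtSolution.eq_zero_of_ray_avoids {M : ℤ} (hsol : IsPtSolution C κ u)
    (hout : IsOutgoing M κ u) (hK : ∀ y ∉ K, C y = 1) {x : Site} {i : Chir}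
    (hray : ∀ k : ℕ, 0 < k → x - k • dir i ∉ K) : u x i = 0 := by
  obtain ⟨N, hN⟩ := hout.exists_eq_zero_behind x i
  have ht := hsol.apply_eq_pow_mul_apply hK (y := x - N • dir i) (i := i) N fun j hj => by
    rw [show x - N • dir i + j • dir i = x - (N - j) • dir i by
      rw [sub_nsmul _ hj.le]; abel]
    exact hray _ (by omega)
  rw [sub_add_cancel, hN, eq_comm, mul_eq_zero] at ht
  exact ht.resolve_left (pow_ne_zero _ (exp_ne_zero _))

/-- `u x i` is transported from the nearest point of `K` behind `x`, or from infinity. -/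
lemma IsPtSolution.eq_zero_of_forall_mem_eq_zero {M : ℤ} (hsol : IsPtSolution C κ u)
    (hout : IsOutgoing M κ u) (hK : ∀ y ∉ K, C y = 1) (hzero : ∀ z ∈ K, ∀ j, u z j = 0) :
    u = 0 := by
  classical
  funext x i
  by_cases hhit : ∃ k : ℕ, 0 < k ∧ x - k • dir i ∈ K
  · have hk := Nat.find_spec hhit
    have hfirst := hsol.pow_mul_apply_eq_ptCoin hK (z := x - Nat.find hhit • dir i) hk.1
      (sub_add_cancel _ _) fun j hj hjk => by
        rw [show x - Nat.find hhit • dir i + j • dir i = x - (Nat.find hhit - j) • dir i by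
          rw [sub_nsmul _ hjk.le]; abel]
        exact fun hmem => Nat.find_min hhit (by omega : Nat.find hhit - j < Nat.find hhit)
          ⟨by omega, hmem⟩
    simp only [ptCoin, hzero _ hk.2, mul_zero, Finset.sum_const_zero, mul_eq_zero] at hfirst
    exact hfirst.resolve_left (pow_ne_zero _ (exp_ne_zero _))
  · push Not at hhit
    exact hsol.eq_zero_of_ray_avoids hout hK fun k hk => hhit k hk

end Transport

lemma mem_corners_iff {m n p q : ℤ} :
    ((p, q) : Site) ∈ corners m n ↔
      (p = 0 ∧ q = 0) ∨ (p = m ∧ q = 0) ∨ (p = m ∧ q = n) ∨ (p = 0 ∧ q = n) := by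
  simp [corners, Prod.ext_iff]

/-- The eight vanishing entries say that no corner scatters `Φ₊` into `Φ₋` or back. -/
def IsDecoupledFourCorner (m n : ℤ) (C : Site → Matrix Chir Chir ℂ) : Prop :=
  (∀ x, x ∉ corners m n → C x = 1) ∧
  C ((0 : ℤ), (0 : ℤ)) 1 0 = 0 ∧ C ((0 : ℤ), (0 : ℤ)) 3 2 = 0 ∧
  C (m, (0 : ℤ)) 3 2 = 0 ∧ C (m, (0 : ℤ)) 0 1 = 0 ∧
  C (m, n) 2 3 = 0 ∧ C (m, n) 0 1 = 0 ∧
  C ((0 : ℤ), n) 1 0 = 0 ∧ C ((0 : ℤ), n) 2 3 = 0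

lemma IsPerturbedFourCorner.isDecoupledFourCorner {m n : ℤ} {ε : ℝ}
    {C : Site → Matrix Chir Chir ℂ} (h : IsPerturbedFourCorner m n ε C) :
    IsDecoupledFourCorner m n C :=
  ⟨h.2.1, h.2.2.2⟩

section Loops

variable {m n M : ℤ} {C : Site → Matrix Chir Chir ℂ} {κ : ℂ} {u : Site → Chir → ℂ}

lemma IsPtSolution.corner_inflow_eq_zero (hm : 0 < m) (hn : 0 < n)
    (hC : ∀ x, x ∉ corners m n → C x = 1) (hsol : IsPtSolution C κ u)
    (hout : IsOutgoing M κ u) :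
    u ((0 : ℤ), (0 : ℤ)) 1 = 0 ∧ u ((0 : ℤ), (0 : ℤ)) 3 = 0 ∧
    u (m, (0 : ℤ)) 0 = 0 ∧ u (m, (0 : ℤ)) 3 = 0 ∧ u (m, n) 0 = 0 ∧ u (m, n) 2 = 0 ∧
    u ((0 : ℤ), n) 1 = 0 ∧ u ((0 : ℤ), n) 2 = 0 := by
  refine ⟨?_, ?_, ?_, ?_, ?_, ?_, ?_, ?_⟩ <;>
    exact hsol.eq_zero_of_ray_avoids hout hC fun k hk => by simp [dir, mem_corners_iff]; omega

lemma IsPtSolution.loop_plus_relations (hm : 0 < m) (hn : 0 < n)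
    (hdec : IsDecoupledFourCorner m n C) (hsol : IsPtSolution C κ u) (hout : IsOutgoing M κ u) :
    exp (-(I * κ)) ^ n.toNat * u ((0 : ℤ), n) 3 = C (0, 0) 3 0 * u (0, 0) 0 ∧
    exp (-(I * κ)) ^ m.toNat * u (m, n) 1 = C (0, n) 1 3 * u (0, n) 3 ∧
    exp (-(I * κ)) ^ n.toNat * u (m, (0 : ℤ)) 2 = C (m, n) 2 1 * u (m, n) 1 ∧
    exp (-(I * κ)) ^ m.toNat * u ((0 : ℤ), (0 : ℤ)) 0 = C (m, 0) 0 2 * u (m, 0) 2 := by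
  obtain ⟨hC, -, h00, -, hm0, hmn, -, h0n, -⟩ := hdec
  obtain ⟨i00, j00, im0, jm0, imn, jmn, i0n, j0n⟩ := hsol.corner_inflow_eq_zero hm hn hC hout
  have hside (z z' : Site) (i : Chir) (L : ℕ) (hL : 0 < L) (hz' : z + L • dir i = z')
      (hfree : ∀ j : ℕ, 0 < j → j < L → z + j • dir i ∉ corners m n) :=
    hsol.pow_mul_apply_eq_ptCoin hC hL hz' hfree
  refine ⟨?_, ?_, ?_, ?_⟩
  · rw [hside (0, 0) _ 3 n.toNat (by omega) (by simp [dir]; omega)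
      fun j hj hjL => by simp [dir, mem_corners_iff]; omega]
    simp [ptCoin, Fin.sum_univ_four, i00, j00, h00]
  · rw [hside (0, n) _ 1 m.toNat (by omega) (by simp [dir]; omega)
      fun j hj hjL => by simp [dir, mem_corners_iff]; omega]
    simp [ptCoin, Fin.sum_univ_four, i0n, j0n, h0n]
  · rw [hside (m, n) _ 2 n.toNat (by omega) (by simp [dir]; omega)
      fun j hj hjL => by simp [dir, mem_corners_iff]; omega]
    simp [ptCoin, Fin.sum_univ_four, imn, jmn, hmn]
  · rw [hside (m, 0) _ 0 m.toNat (by omega) (by simp [dir]; omega)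
      fun j hj hjL => by simp [dir, mem_corners_iff]; omega]
    simp [ptCoin, Fin.sum_univ_four, im0, jm0, hm0]

lemma IsPtSolution.loop_plus_closure (hm : 0 < m) (hn : 0 < n)
    (hdec : IsDecoupledFourCorner m n C) (hsol : IsPtSolution C κ u) (hout : IsOutgoing M κ u) :
    exp (-(I * κ)) ^ (2 * (m + n)).toNat * u ((0 : ℤ), (0 : ℤ)) 0
      = cPlus m n C * u ((0 : ℤ), (0 : ℤ)) 0 := by
  obtain ⟨h1, h2, h3, h4⟩ := hsol.loop_plus_relations hm hn hdec hout
  set L := exp (-(I * κ))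
  rw [show (2 * (m + n)).toNat = m.toNat + n.toNat + m.toNat + n.toNat by omega, cPlus]
  simp only [pow_add]
  linear_combination L ^ n.toNat * L ^ m.toNat * L ^ n.toNat * h4
    + C (m, 0) 0 2 * L ^ n.toNat * L ^ m.toNat * h3
    + C (m, 0) 0 2 * C (m, n) 2 1 * L ^ n.toNat * h2
    + C (m, 0) 0 2 * C (m, n) 2 1 * C (0, n) 1 3 * h1

lemma IsPtSolution.loop_plus_eq_zero (hm : 0 < m) (hn : 0 < n)
    (hdec : IsDecoupledFourCorner m n C) (hsol : IsPtSolution C κ u) (hout : IsOutgoing M κ u)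
    (h0 : u ((0 : ℤ), (0 : ℤ)) 0 = 0) :
    u ((0 : ℤ), n) 3 = 0 ∧ u (m, n) 1 = 0 ∧ u (m, (0 : ℤ)) 2 = 0 := by
  obtain ⟨h1, h2, h3, -⟩ := hsol.loop_plus_relations hm hn hdec hout
  have hpow (k : ℕ) : exp (-(I * κ)) ^ k ≠ 0 := pow_ne_zero _ (exp_ne_zero _)
  have hA : u ((0 : ℤ), n) 3 = 0 := by simpa [h0, hpow] using h1
  have hB : u (m, n) 1 = 0 := by simpa [hA, hpow] using h2
  exact ⟨hA, hB, by simpa [hB, hpow] using h3⟩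

end Loops

/-- Reflection in the diagonal `x₁ = x₂`; adding `2` to a chirality swaps `←` with `↓` and `→`
with `↑`. -/
def reflectCoin (C : Site → Matrix Chir Chir ℂ) : Site → Matrix Chir Chir ℂ :=
  fun x i j => C x.swap (i + 2) (j + 2)

def reflectField (u : Site → Chir → ℂ) : Site → Chir → ℂ :=
  fun x i => u x.swap (i + 2)

section Reflection

variable {m n M : ℤ} {C : Site → Matrix Chir Chir ℂ} {κ : ℂ} {u : Site → Chir → ℂ}

lemma dir_add_two (i : Chir) : dir (i + 2) = (dir i).swap := by
  fin_cases i <;> rfl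

lemma chir_add_two_add_two (i : Chir) : i + 2 + 2 = i := by
  fin_cases i <;> rfl

@[simp] lemma reflectCoin_reflectCoin : reflectCoin (reflectCoin C) = C := by
  ext x i j; simp [reflectCoin, chir_add_two_add_two]

@[simp] lemma reflectField_reflectField : reflectField (reflectField u) = u := by
  ext x i; simp [reflectField, chir_add_two_add_two]

lemma swap_mem_corners {x : Site} : x.swap ∈ corners m n ↔ x ∈ corners n m := by
  obtain ⟨p, q⟩ := x
  simp only [Prod.swap_prod_mk, mem_corners_iff]
  tauto

lemma IsDecoupledFourCorner.reflect (h : IsDecoupledFourCorner m n C) :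
    IsDecoupledFourCorner n m (reflectCoin C) := by
  obtain ⟨hC, z1, z2, z3, z4, z5, z6, z7, z8⟩ := h
  refine ⟨fun x hx => ?_, z2, z1, z7, z8, z6, z5, z3, z4⟩
  ext i j
  simp [reflectCoin, hC x.swap (swap_mem_corners.not.mpr hx), Matrix.one_apply]

lemma cPlus_reflectCoin : cPlus n m (reflectCoin C) = cMinus m n C := by
  simp only [cPlus, cMinus, reflectCoin, Prod.swap_prod_mk, Fin.reduceAdd]
  ring

lemma IsPtSolution.reflect (hsol : IsPtSolution C κ u) :
    IsPtSolution (reflectCoin C) κ (reflectField u) := by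
  rw [isPtSolution_iff] at hsol ⊢
  intro y i
  have hsum : ptCoin (reflectCoin C) (reflectField u) y i = ptCoin C u y.swap (i + 2) :=
    Equiv.sum_comp (Equiv.addRight (2 : Chir)) fun j => C y.swap (i + 2) j * u y.swap j
  rw [hsum, hsol, reflectField, Prod.swap_add, dir_add_two]

lemma IsOutgoing.reflect (hout : IsOutgoing M κ u) : IsOutgoing M κ (reflectField u) := by
  obtain ⟨aL, aR, aD, aU, h0, h0', h1, h1', h2, h2', h3, h3'⟩ := hout
  exact ⟨aD, aU, aL, aR, fun x hx => h2 x.swap hx, fun x hx => h2' x.swap hx,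
    fun x hx => h3 x.swap hx, fun x hx => h3' x.swap hx, fun x hx => h0 x.swap hx,
    fun x hx => h0' x.swap hx, fun x hx => h1 x.swap hx, fun x hx => h1' x.swap hx⟩

lemma IsPtSolution.loop_minus_closure (hm : 0 < m) (hn : 0 < n)
    (hdec : IsDecoupledFourCorner m n C) (hsol : IsPtSolution C κ u) (hout : IsOutgoing M κ u) :
    exp (-(I * κ)) ^ (2 * (m + n)).toNat * u ((0 : ℤ), (0 : ℤ)) 2
      = cMinus m n C * u ((0 : ℤ), (0 : ℤ)) 2 := by
  have h := hsol.reflect.loop_plus_closure hn hm hdec.reflect hout.reflect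
  rwa [cPlus_reflectCoin, add_comm n m] at h

lemma IsPtSolution.loop_minus_eq_zero (hm : 0 < m) (hn : 0 < n)
    (hdec : IsDecoupledFourCorner m n C) (hsol : IsPtSolution C κ u) (hout : IsOutgoing M κ u)
    (h2 : u ((0 : ℤ), (0 : ℤ)) 2 = 0) :
    u (m, (0 : ℤ)) 1 = 0 ∧ u (m, n) 3 = 0 ∧ u ((0 : ℤ), n) 0 = 0 :=
  hsol.reflect.loop_plus_eq_zero hn hm hdec.reflect hout.reflect h2

end Reflection

theorem IsPtSolution.eq_zero_of_apply_origin_eq_zero {m n M : ℤ}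
    {C : Site → Matrix Chir Chir ℂ} {κ : ℂ} {u : Site → Chir → ℂ} (hm : 0 < m) (hn : 0 < n)
    (hdec : IsDecoupledFourCorner m n C) (hsol : IsPtSolution C κ u) (hout : IsOutgoing M κ u)
    (h0 : u ((0 : ℤ), (0 : ℤ)) 0 = 0) (h2 : u ((0 : ℤ), (0 : ℤ)) 2 = 0) : u = 0 := by
  have := hsol.corner_inflow_eq_zero hm hn hdec.1 hout
  have := hsol.loop_plus_eq_zero hm hn hdec hout h0
  have := hsol.loop_minus_eq_zero hm hn hdec hout h2
  refine hsol.eq_zero_of_forall_mem_eq_zero hout hdec.1 fun z hz j => ?_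
  obtain ⟨p, q⟩ := z
  rcases mem_corners_iff.mp hz with ⟨rfl, rfl⟩ | ⟨rfl, rfl⟩ | ⟨rfl, rfl⟩ | ⟨rfl, rfl⟩ <;>
    fin_cases j <;> simp_all

def phase (i : Chir) (x : Site) : ℤ := ![x.1, -x.1, x.2, -x.2] i

lemma phase_add_dir (i : Chir) (x : Site) : phase i (x + dir i) = phase i x - 1 := by
  fin_cases i <;> simp [phase, dir] <;> ring

/-- The mode carried by `Φ₊` is `λ ^ phase j x` times this profile, normalised by
`u_←(0,0) = 1`. Along each line the profile jumps only at corners, by the corner scattering; the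
powers of `λ` are the phase picked up along the edges of the loop. -/
def plusProfile (m n : ℤ) (C : Site → Matrix Chir Chir ℂ) (L : ℂ) (i : Chir) (x : Site) : ℂ :=
  ![if x.2 = 0 then (if m ≤ x.1 then 0 else if 0 ≤ x.1 then 1 else C (0, 0) 0 0)
      else if x.2 = n then (if 0 ≤ x.1 then 0 else C (0, n) 0 3 * C (0, 0) 3 0 * L ^ (-n))
      else 0,
    if x.2 = 0 then
        (if x.1 ≤ m then 0
          else C (m, 0) 1 2 * C (m, n) 2 1 * C (0, n) 1 3 * C (0, 0) 3 0 * L ^ (-n - n))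
      else if x.2 = n then
        (if x.1 ≤ 0 then 0
          else if x.1 ≤ m then C (0, n) 1 3 * C (0, 0) 3 0 * L ^ (-n)
          else C (m, n) 1 1 * C (0, n) 1 3 * C (0, 0) 3 0 * L ^ (-n))
      else 0,
    if x.1 = 0 then (if 0 ≤ x.2 then 0 else C (0, 0) 2 0)
      else if x.1 = m then
        (if n ≤ x.2 then 0
          else if 0 ≤ x.2 then C (m, n) 2 1 * C (0, n) 1 3 * C (0, 0) 3 0 * L ^ (-n - n - m)
          else C (m, 0) 2 2 * C (m, n) 2 1 * C (0, n) 1 3 * C (0, 0) 3 0 * L ^ (-n - n - m))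
      else 0,
    if x.1 = 0 then
        (if x.2 ≤ 0 then 0 else if x.2 ≤ n then C (0, 0) 3 0 else C (0, n) 3 3 * C (0, 0) 3 0)
      else if x.1 = m then
        (if x.2 ≤ n then 0 else C (m, n) 3 1 * C (0, n) 1 3 * C (0, 0) 3 0 * L ^ (-m))
      else 0] i

def plusMode (m n : ℤ) (C : Site → Matrix Chir Chir ℂ) (L : ℂ) (x : Site) (i : Chir) : ℂ :=
  L ^ phase i x * plusProfile m n C L i x

section PlusMode

variable {m n : ℤ} {C : Site → Matrix Chir Chir ℂ} {L : ℂ}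

lemma mul_plusMode_add_dir (hL : L ≠ 0) (y : Site) (i : Chir) :
    L * plusMode m n C L (y + dir i) i = L ^ phase i y * plusProfile m n C L i (y + dir i) := by
  rw [plusMode, phase_add_dir, zpow_sub_one₀ hL]
  field_simp

lemma plusProfile_add_dir (hm : 0 < m) (hn : 0 < n) {x : Site} (hx : x ∉ corners m n)
    (i : Chir) : plusProfile m n C L i (x + dir i) = plusProfile m n C L i x := by
  obtain ⟨p, q⟩ := x
  rw [mem_corners_iff] at hx
  fin_cases i <;>
    simp only [plusProfile, dir, Fin.zero_eta, Fin.mk_one, Fin.reduceFinMk, Fin.isValue,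
      Matrix.cons_val_zero, Matrix.cons_val_one, Matrix.cons_val, Prod.mk_add_mk, add_zero] <;>
    split_ifs <;> first | omega | rfl

lemma ptCoin_plusMode (hm : 0 < m) (hn : 0 < n) (hdec : IsDecoupledFourCorner m n C)
    (hL : L ≠ 0) (hcl : L ^ (2 * (m + n)) = cPlus m n C) {z : Site} (hz : z ∈ corners m n)
    (i : Chir) :
    ptCoin C (plusMode m n C L) z i = L ^ phase i z * plusProfile m n C L i (z + dir i) := by
  obtain ⟨-, z1, -, z3, -, -, z6, -, z8⟩ := hdec
  have hloop : C (0, 0) 3 0 * C (m, 0) 0 2 * C (m, n) 2 1 * C (0, n) 1 3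
      = L ^ m * L ^ m * L ^ n * L ^ n := by
    rw [← cPlus, ← hcl, ← zpow_add₀ hL, ← zpow_add₀ hL, ← zpow_add₀ hL]
    ring_nf
  have hLm : L ^ m ≠ 0 := zpow_ne_zero _ hL
  have hLn : L ^ n ≠ 0 := zpow_ne_zero _ hL
  obtain ⟨p, q⟩ := z
  -- The equation for `←` at `(m, 0)` closes the loop `Φ₊`: it is `hloop`.
  rcases mem_corners_iff.mp hz with ⟨rfl, rfl⟩ | ⟨rfl, rfl⟩ | ⟨rfl, rfl⟩ | ⟨rfl, rfl⟩ <;>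
    fin_cases i <;>
    simp [ptCoin, Fin.sum_univ_four, plusMode, plusProfile, phase, dir] <;>
    split_ifs <;> (try omega) <;>
    simp only [z1, z3, z6, z8, zpow_neg, zpow_sub₀ hL, zero_mul, zero_add, add_zero] <;>
    first | ring1 | (field_simp <;> first | ring1 | linear_combination hloop)

lemma isOutgoing_plusMode (hm : 0 < m) (hn : 0 < n) (κ : ℂ) :
    IsOutgoing (max m n) κ (plusMode m n C (exp (-(I * κ)))) := by
  have hexp (t : ℤ) : exp (-(I * κ * t)) = exp (-(I * κ)) ^ t := by
    rw [← exp_int_mul]; ring_nf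
  have hexp' (t : ℤ) : exp (I * κ * t) = exp (-(I * κ)) ^ (-t) := by
    rw [← exp_int_mul]; push_cast; ring_nf
  refine ⟨fun y => plusProfile m n C (exp (-(I * κ))) 0 (-max m n - 1, y),
    fun y => plusProfile m n C (exp (-(I * κ))) 1 (max m n + 1, y),
    fun y => plusProfile m n C (exp (-(I * κ))) 2 (y, -max m n - 1),
    fun y => plusProfile m n C (exp (-(I * κ))) 3 (y, max m n + 1),
    ?_, ?_, ?_, ?_, ?_, ?_, ?_, ?_⟩ <;>
    rintro ⟨p, q⟩ hx <;>
    simp only [plusMode, plusProfile, phase, hexp, hexp', Matrix.cons_val] at hx ⊢ <;>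
    split_ifs <;> first | omega | ring1

theorem exists_outgoing_plus (hm : 0 < m) (hn : 0 < n) (hdec : IsDecoupledFourCorner m n C)
    {κ : ℂ} (hcl : exp (-(I * κ)) ^ (2 * (m + n)).toNat = cPlus m n C) :
    ∃ u : Site → Chir → ℂ, u ≠ 0 ∧ IsOutgoing (max m n) κ u ∧ IsPtSolution C κ u := by
  have hL : exp (-(I * κ)) ≠ 0 := exp_ne_zero _
  have hclz : exp (-(I * κ)) ^ (2 * (m + n)) = cPlus m n C := by
    rw [← hcl, ← zpow_natCast, Int.toNat_of_nonneg (by omega)]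
  refine ⟨plusMode m n C (exp (-(I * κ))), fun h => ?_, isOutgoing_plusMode hm hn κ,
    isPtSolution_iff.mpr fun y i => ?_⟩
  · have h00 := congrFun (congrFun h (0, 0)) 0
    simp [plusMode, plusProfile, phase, hm.not_ge] at h00
  · rw [mul_plusMode_add_dir hL]
    by_cases hy : y ∈ corners m n
    · exact ptCoin_plusMode hm hn hdec hL hclz hy i
    · rw [ptCoin_of_eq_one (hdec.1 y hy), plusMode, plusProfile_add_dir hm hn hy]

theorem exists_outgoing_minus (hm : 0 < m) (hn : 0 < n) (hdec : IsDecoupledFourCorner m n C)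
    {κ : ℂ} (hcl : exp (-(I * κ)) ^ (2 * (m + n)).toNat = cMinus m n C) :
    ∃ u : Site → Chir → ℂ, u ≠ 0 ∧ IsOutgoing (max m n) κ u ∧ IsPtSolution C κ u := by
  rw [← cPlus_reflectCoin, ← add_comm n m] at hcl
  obtain ⟨u, hu, hout, hsol⟩ := exists_outgoing_plus hn hm hdec.reflect hcl
  refine ⟨reflectField u, fun h => hu ?_, max_comm n m ▸ hout.reflect, ?_⟩
  · rw [← reflectField_reflectField (u := u), h]
    rfl
  · simpa using hsol.reflect

end PlusMode

section Counting

variable {m n : ℤ} {ε : ℝ} {C : Site → Matrix Chir Chir ℂ}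

lemma IsPerturbedFourCorner.apply_ne_zero (h : IsPerturbedFourCorner m n ε C) (hε : ε ≤ 1)
    {z : Site} (hz : z ∈ corners m n) {i j : Chir} (hone : fourCornerCoin m n z i j = 1) :
    C z i j ≠ 0 := by
  intro h0
  have hnear := h.2.2.1 z hz i j
  rw [h0, hone] at hnear
  norm_num at hnear
  linarith

lemma IsPerturbedFourCorner.cPlus_ne_zero_and_cMinus_ne_zero
    (h : IsPerturbedFourCorner m n ε C) (hm : 0 < m) (hn : 0 < n) (hε : ε ≤ 1) :
    cPlus m n C ≠ 0 ∧ cMinus m n C ≠ 0 := by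
  constructor <;> simp only [cPlus, cMinus] <;>
    refine mul_ne_zero (mul_ne_zero (mul_ne_zero ?_ ?_) ?_) ?_ <;>
    refine h.apply_ne_zero hε (by simp [mem_corners_iff]) ?_ <;>
    simp [fourCornerCoin, hm.ne, hm.ne', hn.ne']

lemma IsPerturbedFourCorner.norm_cPlus_le_one_and_norm_cMinus_le_one
    (h : IsPerturbedFourCorner m n ε C) : ‖cPlus m n C‖ ≤ 1 ∧ ‖cMinus m n C‖ ≤ 1 := by
  have hb (x : Site) (i j : Chir) : ‖C x i j‖ ≤ 1 := entry_norm_bound_of_unitary (h.1 x) i j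
  constructor <;> simp only [cPlus, cMinus, norm_mul] <;>
    exact mul_le_one₀ (mul_le_one₀ (mul_le_one₀ (hb _ _ _) (norm_nonneg _) (hb _ _ _))
      (norm_nonneg _) (hb _ _ _)) (norm_nonneg _) (hb _ _ _)

end Counting

lemma exp_neg_two_mul_eq_pow {m n : ℤ} (hmn : 0 ≤ m + n) (κ : ℂ) :
    exp (-(2 * ((m : ℂ) + (n : ℂ)) * I * κ)) = exp (-(I * κ)) ^ (2 * (m + n)).toNat := by
  have hN : ((2 * (m + n)).toNat : ℤ) = 2 * (m + n) := Int.toNat_of_nonneg (by omega)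
  rw [← exp_nat_mul, ← Int.cast_natCast, hN]
  push_cast
  congr 1
  ring

lemma exists_im_nonpos_exp_eq {z : ℂ} (hz0 : z ≠ 0) (hz1 : ‖z‖ ≤ 1) :
    ∃ κ : ℂ, κ.im ≤ 0 ∧ exp (-(I * κ)) = z := by
  refine ⟨I * log z, ?_, ?_⟩
  · simpa [log_re] using Real.log_nonpos (norm_nonneg z) hz1
  · rw [← mul_assoc, I_mul_I, neg_one_mul, neg_neg, exp_log hz0]

lemma ncard_pow_eq {N : ℕ} (hN : N ≠ 0) {c : ℂ} (hc : c ≠ 0) : {z : ℂ | z ^ N = c}.ncard = N := by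
  classical
  have hζ := Complex.isPrimitiveRoot_exp N hN
  have hroots : {z : ℂ | z ^ N = c} = ↑(Polynomial.nthRoots N c).toFinset := by
    ext; simp [Polynomial.mem_nthRoots (Nat.pos_of_ne_zero hN)]
  rw [hroots, Set.ncard_coe_finset, Multiset.toFinset_card_of_nodup (hζ.nthRoots_nodup hc),
    hζ.card_nthRoots, if_pos (IsAlgClosed.exists_pow_nat_eq c (Nat.pos_of_ne_zero hN))]

/-- Every root of `c` lies in the closed unit disc, hence is some `e^{-iκ}` with `Im κ ≤ 0`. -/
lemma ncard_exp_im_nonpos_eq {m n : ℤ} (hmn : 0 < m + n) {c : ℂ} (hc0 : c ≠ 0) (hc1 : ‖c‖ ≤ 1) :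
    Set.ncard {z : ℂ | ∃ κ : ℂ, κ.im ≤ 0 ∧ z = exp (-(I * κ)) ∧
        exp (-(2 * ((m : ℂ) + (n : ℂ)) * I * κ)) = c} = (2 * (m + n)).toNat := by
  have hN : (2 * (m + n)).toNat ≠ 0 := by omega
  convert ncard_pow_eq hN hc0 using 2
  ext z
  simp only [Set.mem_ofPred_eq, exp_neg_two_mul_eq_pow hmn.le]
  refine ⟨fun ⟨κ, _, hz, hκ⟩ => hz ▸ hκ, fun hz => ?_⟩
  have hz0 : z ≠ 0 := by
    rintro rfl
    exact hc0 (by rw [← hz, zero_pow hN])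
  have hz1 : ‖z‖ ≤ 1 := by
    by_contra! hgt
    have := one_lt_pow₀ hgt hN
    rw [← norm_pow, hz] at this
    linarith
  obtain ⟨κ, hκ, rfl⟩ := exists_im_nonpos_exp_eq hz0 hz1
  exact ⟨κ, hκ, rfl, hz⟩

theorem fourCorner_perturbed_eigenvalue_resonance_count_general
    (m₀ n₀ : ℤ) (hm : 1 ≤ m₀) (hn : 1 ≤ n₀)
    (ε : ℝ) (hε1 : ε ≤ 1)
    (Cε : Site → Matrix Chir Chir ℂ) (hCε : IsPerturbedFourCorner m₀ n₀ ε Cε) :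
    (∀ κ : ℂ, κ.im ≤ 0 →
      ((∃ u : Site → Chir → ℂ, u ≠ 0 ∧ IsOutgoing (max m₀ n₀) κ u ∧ IsPtSolution Cε κ u) ↔
        (Complex.exp (-(2 * ((m₀ : ℂ) + (n₀ : ℂ)) * Complex.I * κ)) = cPlus m₀ n₀ Cε ∨
         Complex.exp (-(2 * ((m₀ : ℂ) + (n₀ : ℂ)) * Complex.I * κ)) = cMinus m₀ n₀ Cε))) ∧
    (∀ κ : ℂ, κ.im ≤ 0 → ∀ u : Site → Chir → ℂ,
      IsOutgoing (max m₀ n₀) κ u → IsPtSolution Cε κ u →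
      (∀ w ∈ imPhiPlus m₀ n₀ ∪ imPhiMinus m₀ n₀, u w.1 w.2 = 0) →
      ∀ (x : Site) (i : Chir), u x i = 0) ∧
    Set.ncard {z : ℂ | ∃ κ : ℂ, κ.im ≤ 0 ∧ z = Complex.exp (-(Complex.I * κ)) ∧
        Complex.exp (-(2 * ((m₀ : ℂ) + (n₀ : ℂ)) * Complex.I * κ)) = cPlus m₀ n₀ Cε}
      = (2 * (m₀ + n₀)).toNat ∧
    Set.ncard {z : ℂ | ∃ κ : ℂ, κ.im ≤ 0 ∧ z = Complex.exp (-(Complex.I * κ)) ∧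
        Complex.exp (-(2 * ((m₀ : ℂ) + (n₀ : ℂ)) * Complex.I * κ)) = cMinus m₀ n₀ Cε}
      = (2 * (m₀ + n₀)).toNat := by
  have hdec := hCε.isDecoupledFourCorner
  obtain ⟨hP0, hM0⟩ := hCε.cPlus_ne_zero_and_cMinus_ne_zero hm hn hε1
  obtain ⟨hP1, hM1⟩ := hCε.norm_cPlus_le_one_and_norm_cMinus_le_one
  refine ⟨fun κ _ => ⟨?_, ?_⟩, fun κ _ u hout hsol hvan x i => ?_,
    ncard_exp_im_nonpos_eq (by omega) hP0 hP1, ncard_exp_im_nonpos_eq (by omega) hM0 hM1⟩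
  · rintro ⟨u, hu, hout, hsol⟩
    rw [exp_neg_two_mul_eq_pow (by omega)]
    by_contra! hne
    refine hu (hsol.eq_zero_of_apply_origin_eq_zero hm hn hdec hout ?_ ?_)
    · exact (mul_eq_mul_right_iff.mp (hsol.loop_plus_closure hm hn hdec hout)).resolve_left hne.1
    · exact (mul_eq_mul_right_iff.mp (hsol.loop_minus_closure hm hn hdec hout)).resolve_left hne.2
  · rw [exp_neg_two_mul_eq_pow (by omega)]
    rintro (hcl | hcl)
    exacts [exists_outgoing_plus hm hn hdec hcl, exists_outgoing_minus hm hn hdec hcl]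
  · have h0 := hvan ((0, 0), 0) (by simp [imPhiPlus]; omega)
    have h2 := hvan ((0, 0), 2) (by simp [imPhiMinus]; omega)
    rw [hsol.eq_zero_of_apply_origin_eq_zero hm hn hdec hout h0 h2]
    rfl

/-- outgoing solutions of a perturbed four-corner quantum walk exist exactly when
`e^{−2i(m₀+n₀)κ} ∈ {c_ε⁺, c_ε⁻}`; outgoing solutions vanishing along `Φ₊` and `Φ₋` vanish
identically; each of `c_ε⁺`, `c_ε⁻` contributes exactly `2(m₀+n₀)` values of `κ` mod `2π`. -/
theorem fourCorner_perturbed_eigenvalue_resonance_count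
    (m₀ n₀ : ℤ) (hm : 1 ≤ m₀) (hn : 1 ≤ n₀)
    (ε : ℝ) (hε0 : 0 < ε) (hε1 : ε ≤ 1)
    (Cε : Site → Matrix Chir Chir ℂ) (hCε : IsPerturbedFourCorner m₀ n₀ ε Cε)
    (S Cop : H →L[ℂ] H) (hS : IsShiftOp S) (hCop : IsCoinOp Cop Cε)
    (hUnit : S.comp Cop ∈ unitary (H →L[ℂ] H)) :
    (∀ κ : ℂ, κ.im ≤ 0 →
      ((∃ u : Site → Chir → ℂ, u ≠ 0 ∧ IsOutgoing (max m₀ n₀) κ u ∧ IsPtSolution Cε κ u) ↔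
        (Complex.exp (-(2 * ((m₀ : ℂ) + (n₀ : ℂ)) * Complex.I * κ)) = cPlus m₀ n₀ Cε ∨
         Complex.exp (-(2 * ((m₀ : ℂ) + (n₀ : ℂ)) * Complex.I * κ)) = cMinus m₀ n₀ Cε))) ∧
    (∀ κ : ℂ, κ.im ≤ 0 → ∀ u : Site → Chir → ℂ,
      IsOutgoing (max m₀ n₀) κ u → IsPtSolution Cε κ u →
      (∀ w ∈ imPhiPlus m₀ n₀ ∪ imPhiMinus m₀ n₀, u w.1 w.2 = 0) →
      ∀ (x : Site) (i : Chir), u x i = 0) ∧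
    Set.ncard {z : ℂ | ∃ κ : ℂ, κ.im ≤ 0 ∧ z = Complex.exp (-(Complex.I * κ)) ∧
        Complex.exp (-(2 * ((m₀ : ℂ) + (n₀ : ℂ)) * Complex.I * κ)) = cPlus m₀ n₀ Cε}
      = (2 * (m₀ + n₀)).toNat ∧
    Set.ncard {z : ℂ | ∃ κ : ℂ, κ.im ≤ 0 ∧ z = Complex.exp (-(Complex.I * κ)) ∧
        Complex.exp (-(2 * ((m₀ : ℂ) + (n₀ : ℂ)) * Complex.I * κ)) = cMinus m₀ n₀ Cε}
      = (2 * (m₀ + n₀)).toNat :=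
  fourCorner_perturbed_eigenvalue_resonance_count_general m₀ n₀ hm hn ε hε1 Cε hCε

end QWPaper
end
end
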